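/- arXiv:1801.03985 — 9 statements merged into one kernel-verified Lean document; each statement's English description precedes it below -/
import Mathlib

section
/- Let G be a connected simple graph on n ≥ 2 vertices. Then every complex root z of the Wiener polynomial W(G;x) satisfies |z| ≤ C(n,2) − 1, where C(n,2) = n(n−1)/2. -/
set_option linter.unusedVariables false

/-- The Wiener polynomial of a graph `G`, evaluated at `x : ℂ`:
`W(G;x) = Σ x^{d(u,v)}`, the sum over all unordered pairs of distinct vertices. -/
noncomputable def wienerPoly {V : Type*} [Fintype V] [DecidableEq V]
    (G : SimpleGraph V) (x : ℂ) : ℂ :=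
  ∑ p ∈ (Finset.univ : Finset V).sym2.filter (fun p => ¬ p.IsDiag),
    x ^ Sym2.lift ⟨fun u v => G.dist u v, fun u v => SimpleGraph.dist_comm⟩ p

/-- `distCount G i` is `d_i(G)`, the number of unordered pairs of distinct
vertices of `G` at graph distance exactly `i`. -/
noncomputable def distCount {V : Type*} [Fintype V] [DecidableEq V]
    (G : SimpleGraph V) (i : ℕ) : ℕ :=
  (((Finset.univ : Finset V).sym2.filter (fun p => ¬ p.IsDiag)).filter
    (fun p => Sym2.lift ⟨fun u v => G.dist u v, fun u v => SimpleGraph.dist_comm⟩ p = i)).card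

/-- The complete graph on `n` vertices minus one edge. -/
def KminusE (n : ℕ) [NeZero n] : SimpleGraph (Fin n) :=
  (⊤ : SimpleGraph (Fin n)).deleteEdges {s(0, 1)}

/-- The star `K_{1,n-1}`: the center `0` is adjacent to the `n - 1` other vertices. -/
def starGraph (n : ℕ) [NeZero n] : SimpleGraph (Fin n) where
  Adj u v := u ≠ v ∧ (u = 0 ∨ v = 0)
  symm := by
    constructor
    intro u v h
    exact ⟨h.1.symm, h.2.symm⟩
  loopless := by
    constructor
    intro u h
    exact h.1 rfl

theorem stmt_0' {V : Type*} [Fintype V] [DecidableEq V] (G : SimpleGraph V) (n : ℕ)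
    (hconn : G.Connected) (hcard : Fintype.card V = n) (hn : 2 ≤ n)
    (z : ℂ) (hz : (∑ p ∈ (Finset.univ : Finset V).sym2.filter (fun p => ¬ p.IsDiag),
      z ^ Sym2.lift ⟨fun u v => G.dist u v, fun u v => SimpleGraph.dist_comm⟩ p) = 0) :
    ‖z‖ ≤ (n : ℝ) * ((n : ℝ) - 1) / 2 - 1 := by
  classical
  set f : Sym2 V → ℕ := Sym2.lift ⟨fun u v => G.dist u v, fun u v => SimpleGraph.dist_comm⟩
    with hfdef
  set S : Finset (Sym2 V) := (Finset.univ : Finset V).sym2.filter (fun p => ¬ p.IsDiag)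
    with hSdef
  have hScard : S.card = Nat.choose n 2 := by
    rw [hSdef, Finset.sym2_univ, ← hcard, ← Sym2.card_subtype_not_diag]
    simp [Fintype.card_subtype]
  have hf1 : ∀ p ∈ S, 1 ≤ f p := by
    intro p hp
    induction p using Sym2.ind with
    | _ u v =>
      rw [hSdef, Finset.mem_filter] at hp
      have hne : u ≠ v := by simpa [Sym2.mk_isDiag_iff] using hp.2
      show 0 < f s(u, v)
      simpa [hfdef] using hconn.pos_dist_of_ne hne
  have h2dvd : 2 ∣ n * (n - 1) := by
    obtain ⟨m, rfl⟩ : ∃ m, n = m + 1 := ⟨n - 1, by omega⟩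
    simpa [Nat.add_sub_cancel, mul_comm] using (Nat.even_mul_succ_self m).two_dvd
  have hmcast : ((S.card : ℝ)) = (n : ℝ) * ((n : ℝ) - 1) / 2 := by
    rw [hScard, Nat.choose_two_right]
    rw [Nat.cast_div h2dvd (by norm_num)]
    have h1n : ((n - 1 : ℕ) : ℝ) = (n : ℝ) - 1 := by
      have : (1 : ℕ) ≤ n := by omega
      push_cast [this]; ring
    rw [Nat.cast_mul, h1n]
    norm_num
  rcases le_or_gt (‖z‖) 1 with hz1 | hz1
  · rcases eq_or_lt_of_le hn with h2 | h3
    · have hS1 : S.card = 1 := by rw [hScard, ← h2]; rfl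
      obtain ⟨p, hp⟩ := Finset.card_eq_one.mp hS1
      rw [hp, Finset.sum_singleton] at hz
      have hz0 : z = 0 := by
        have h1 := hf1 p (by rw [hp]; exact Finset.mem_singleton_self p)
        exact pow_eq_zero_iff (by omega) |>.mp hz
      rw [hz0]
      rw [← h2]
      norm_num
    · have h3' : (3 : ℝ) ≤ n := by exact_mod_cast h3
      nlinarith [hz1]
  · have hSne : S.Nonempty := by
      have : 0 < S.card := by rw [hScard]; exact Nat.choose_pos hn
      exact Finset.card_pos.mp this
    set D : ℕ := S.sup f with hDdef
    obtain ⟨p₀, hp₀S, hp₀⟩ := Finset.exists_mem_eq_sup S hSne f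
    have hD1 : 1 ≤ D := by rw [hDdef, hp₀]; exact hf1 p₀ hp₀S
    set T : Finset (Sym2 V) := S.filter (fun p => f p = D) with hTdef
    set R : Finset (Sym2 V) := S.filter (fun p => ¬ f p = D) with hRdef
    have hk1 : 1 ≤ T.card := Finset.card_pos.mpr ⟨p₀, Finset.mem_filter.mpr ⟨hp₀S, hp₀.symm⟩⟩
    have hkr : T.card + R.card = S.card := Finset.card_filter_add_card_filter_not _
    have hsplit : (∑ p ∈ T, z ^ f p) + (∑ p ∈ R, z ^ f p) = 0 := by
      rw [hTdef, hRdef, Finset.sum_filter_add_sum_filter_not]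
      exact hz
    have hTsum : (∑ p ∈ T, z ^ f p) = (T.card : ℂ) * z ^ D := by
      rw [Finset.sum_congr rfl (fun p hp => by rw [(Finset.mem_filter.mp hp).2])]
      simp [mul_comm]
    have habs : (T.card : ℝ) * ‖z‖ ^ D ≤ (R.card : ℝ) * ‖z‖ ^ (D - 1) := by
      have h1 : ‖(T.card : ℂ) * z ^ D‖ ≤ ∑ p ∈ R, ‖z ^ f p‖ := by
        rw [← hTsum]
        have hneg : (∑ p ∈ T, z ^ f p) = - ∑ p ∈ R, z ^ f p := by linear_combination hsplit
        rw [hneg, norm_neg]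
        exact norm_sum_le _ _
      have h2 : ∑ p ∈ R, ‖z ^ f p‖ ≤ (R.card : ℝ) * ‖z‖ ^ (D - 1) := by
        calc ∑ p ∈ R, ‖z ^ f p‖
            ≤ ∑ p ∈ R, ‖z‖ ^ (D - 1) := by
              refine Finset.sum_le_sum fun p hp => ?_
              rw [norm_pow]
              have hpmem := Finset.mem_filter.mp hp
              have hle : f p ≤ D := Finset.le_sup hpmem.1
              have : f p ≤ D - 1 := by omega
              exact pow_le_pow_right₀ (le_of_lt hz1) this
          _ = (R.card : ℝ) * ‖z‖ ^ (D - 1) := by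
              rw [Finset.sum_const, nsmul_eq_mul]
      calc (T.card : ℝ) * ‖z‖ ^ D = ‖(T.card : ℂ) * z ^ D‖ := by
            rw [norm_mul, norm_pow, Complex.norm_natCast]
        _ ≤ _ := le_trans h1 h2
    -- finish
    have hc : (0 : ℝ) < ‖z‖ ^ (D - 1) := pow_pos (lt_trans one_pos hz1) _
    have hpowD : ‖z‖ ^ D = ‖z‖ ^ (D - 1) * ‖z‖ := by
      rw [← pow_succ]
      congr 1
      omega
    rw [hpowD] at habs
    have hzle : (T.card : ℝ) * ‖z‖ ≤ (R.card : ℝ) :=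
      (mul_le_mul_iff_of_pos_right hc).mp (by linarith [habs])
    have hk1' : (1 : ℝ) ≤ (T.card : ℝ) := by exact_mod_cast hk1
    have hr : (R.card : ℝ) = (S.card : ℝ) - (T.card : ℝ) := by
      have : (T.card : ℝ) + (R.card : ℝ) = (S.card : ℝ) := by exact_mod_cast hkr
      linarith
    have habs0 : (0 : ℝ) ≤ ‖z‖ := norm_nonneg z
    nlinarith [hzle, hr, hk1', hmcast, habs0]

/-- Every complex Wiener root `z` of a connected graph of order `n ≥ 2`
satisfies `|z| ≤ C(n,2) - 1`. -/
theorem stmt_0 {V : Type*} [Fintype V] [DecidableEq V] (G : SimpleGraph V) (n : ℕ)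
    (hconn : G.Connected) (hcard : Fintype.card V = n) (hn : 2 ≤ n)
    (z : ℂ) (hz : wienerPoly G z = 0) :
    ‖z‖ ≤ (n : ℝ) * ((n : ℝ) - 1) / 2 - 1 := by
  unfold wienerPoly at hz
  exact stmt_0' G n hconn hcard hn z hz
end

section
/- Let G be a connected simple graph on n ≥ 3 vertices. If some complex Wiener root z of G satisfies |z| = C(n,2) − 1, then G is isomorphic to K_n − e, the complete graph on n vertices minus one edge. -/
set_option linter.unusedVariables false

/-- If a connected graph of order `n ≥ 3` has a Wiener root of modulus
`C(n,2) - 1`, then it is isomorphic to `K_n - e`. -/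
theorem stmt_2 {V : Type*} [Fintype V] [DecidableEq V] (G : SimpleGraph V) (n : ℕ) [NeZero n]
    (hconn : G.Connected) (hcard : Fintype.card V = n) (hn : 3 ≤ n)
    (z : ℂ) (hz : wienerPoly G z = 0)
    (habs : ‖z‖ = (n : ℝ) * ((n : ℝ) - 1) / 2 - 1) :
    Nonempty (G ≃g KminusE n) := by
  classical
  set f : Sym2 V → ℕ :=
    Sym2.lift ⟨fun u v => G.dist u v, fun u v => SimpleGraph.dist_comm⟩ with hf
  set S : Finset (Sym2 V) :=
    (Finset.univ : Finset V).sym2.filter (fun p => ¬ p.IsDiag) with hS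
  have hz' : ∑ p ∈ S, z ^ f p = 0 := hz
  set m : ℕ := S.card with hm
  -- cardinality of S
  have hScard : m = n.choose 2 := by
    rw [hm, hS, Finset.sym2_univ, ← Fintype.card_subtype, Sym2.card_subtype_not_diag, hcard]
  have hm3 : 3 ≤ m := by
    rw [hScard]
    calc 3 = Nat.choose 3 2 := by decide
    _ ≤ n.choose 2 := Nat.choose_le_choose 2 hn
  set R : ℝ := ‖z‖ with hRdef
  have hR : R = (m : ℝ) - 1 := by
    rw [habs, hScard, Nat.cast_choose_two]
  have hR2 : (2 : ℝ) ≤ R := by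
    rw [hR]
    have : (3 : ℝ) ≤ (m : ℝ) := by exact_mod_cast hm3
    linarith
  have hR1 : (1 : ℝ) < R := by linarith
  have hR0 : (0 : ℝ) < R := by linarith
  -- distances are positive on S
  have hfmem : ∀ p ∈ S, 1 ≤ f p := by
    intro p hp
    induction p with
    | _ u v =>
      rw [hS, Finset.mem_filter, Sym2.mk_isDiag_iff] at hp
      have : 0 < G.dist u v := hconn.pos_dist_of_ne hp.2
      exact this
  have hSne : S.Nonempty := Finset.card_pos.1 (by omega)
  obtain ⟨p0, hp0S, hp0max⟩ := Finset.exists_max_image S f hSne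
  set D : ℕ := f p0 with hD
  have hD1 : 1 ≤ D := hfmem p0 hp0S
  set A : Finset (Sym2 V) := S.filter (fun p => f p = D) with hA
  set B : Finset (Sym2 V) := S.filter (fun p => ¬ f p = D) with hB
  have hABcard : A.card + B.card = m := Finset.card_filter_add_card_filter_not _
  have hp0A : p0 ∈ A := Finset.mem_filter.2 ⟨hp0S, rfl⟩
  have hsplit : (∑ p ∈ A, z ^ f p) + (∑ p ∈ B, z ^ f p) = 0 := by
    rw [Finset.sum_filter_add_sum_filter_not]; exact hz'
  have hAsum : (∑ p ∈ A, z ^ f p) = (A.card : ℂ) * z ^ D := by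
    rw [Finset.sum_congr rfl (fun p hp => by rw [(Finset.mem_filter.1 hp).2]),
      Finset.sum_const, nsmul_eq_mul]
  have hkey : (A.card : ℂ) * z ^ D = - ∑ p ∈ B, z ^ f p := by
    rw [← hAsum]; linear_combination hsplit
  have hBle : ∀ p ∈ B, f p ≤ D - 1 := by
    intro p hp
    rw [hB, Finset.mem_filter] at hp
    have h1 := hp0max p hp.1
    omega
  have habs1 : (A.card : ℝ) * R ^ D ≤ ∑ p ∈ B, R ^ f p := by
    calc (A.card : ℝ) * R ^ D = ‖(A.card : ℂ) * z ^ D‖ := by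
          rw [norm_mul, norm_pow, Complex.norm_natCast, hRdef]
      _ = ‖∑ p ∈ B, z ^ f p‖ := by rw [hkey, norm_neg]
      _ ≤ ∑ p ∈ B, ‖z ^ f p‖ := norm_sum_le _ _
      _ = ∑ p ∈ B, R ^ f p := by
          refine Finset.sum_congr rfl fun p hp => ?_
          rw [norm_pow, hRdef]
  have habs2 : ∑ p ∈ B, R ^ f p ≤ (B.card : ℝ) * R ^ (D - 1) := by
    calc ∑ p ∈ B, R ^ f p ≤ ∑ p ∈ B, R ^ (D - 1) := by
          refine Finset.sum_le_sum fun p hp => ?_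
          exact pow_le_pow_right₀ (by linarith) (hBle p hp)
      _ = (B.card : ℝ) * R ^ (D - 1) := by rw [Finset.sum_const, nsmul_eq_mul]
  have hpowD : R ^ D = R * R ^ (D - 1) := by
    conv_lhs => rw [show D = (D - 1) + 1 by omega]
    rw [pow_succ']
  have hARB : (A.card : ℝ) * R ≤ (B.card : ℝ) := by
    have h := le_trans habs1 habs2
    rw [hpowD] at h
    have hpos : (0 : ℝ) < R ^ (D - 1) := pow_pos hR0 _
    have h' : ((A.card : ℝ) * R) * R ^ (D - 1) ≤ (B.card : ℝ) * R ^ (D - 1) := by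
      ring_nf at h ⊢; linarith
    exact le_of_mul_le_mul_right h' hpos
  have hAcard1 : 1 ≤ A.card := Finset.card_pos.2 ⟨p0, hp0A⟩
  have hAcard : A.card = 1 := by
    have hAr : (1 : ℝ) ≤ (A.card : ℝ) := by exact_mod_cast hAcard1
    have hBr : (B.card : ℝ) = (m : ℝ) - (A.card : ℝ) := by
      have : (A.card : ℝ) + (B.card : ℝ) = (m : ℝ) := by exact_mod_cast hABcard
      linarith
    have hmr : (3 : ℝ) ≤ (m : ℝ) := by exact_mod_cast hm3
    have : (A.card : ℝ) ≤ 1 := by nlinarith [hARB, hR]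
    have : A.card ≤ 1 := by exact_mod_cast this
    omega
  have hBcard : B.card = m - 1 := by omega
  -- equality forces all pairs in B at distance D - 1
  have hsumeq : ∑ p ∈ B, R ^ f p = ∑ p ∈ B, R ^ (D - 1) := by
    have h1 : (1 : ℝ) * R ^ D ≤ ∑ p ∈ B, R ^ f p := by
      have := habs1; rw [hAcard] at this; exact_mod_cast this
    have h2 : (B.card : ℝ) * R ^ (D - 1) = R ^ D := by
      rw [hBcard, hpowD]
      have : ((m - 1 : ℕ) : ℝ) = R := by
        rw [hR]; push_cast [Nat.cast_sub (by omega : 1 ≤ m)]; ring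
      rw [this]
    have h3 : ∑ p ∈ B, R ^ (D - 1) = (B.card : ℝ) * R ^ (D - 1) := by
      rw [Finset.sum_const, nsmul_eq_mul]
    rw [h3, h2]
    linarith [habs2, h2 ▸ habs2]
  have hallB : ∀ p ∈ B, f p = D - 1 := by
    have hz0 : ∑ p ∈ B, (R ^ (D - 1) - R ^ f p) = 0 := by
      rw [Finset.sum_sub_distrib, hsumeq]; ring
    have hnn : ∀ p ∈ B, 0 ≤ R ^ (D - 1) - R ^ f p := by
      intro p hp
      have := pow_le_pow_right₀ (le_of_lt hR1) (hBle p hp)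
      linarith
    have := (Finset.sum_eq_zero_iff_of_nonneg hnn).1 hz0
    intro p hp
    have h0 := this p hp
    have hpow : R ^ f p = R ^ (D - 1) := by linarith
    exact (pow_right_strictMono₀ hR1).injective hpow
  -- B is nonempty
  have hBne : B.Nonempty := Finset.card_pos.1 (by omega)
  have hD2' : 2 ≤ D := by
    obtain ⟨p1, hp1⟩ := hBne
    have h1 := hfmem p1 (Finset.mem_filter.1 hp1).1
    have h2 := hallB p1 hp1
    omega
  -- there is an adjacent pair, so D = 2
  have hmemS : ∀ u v : V, u ≠ v → s(u, v) ∈ S := by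
    intro u v huv
    rw [hS, Finset.mem_filter, Finset.sym2_univ]
    exact ⟨Finset.mem_univ _, by rw [Sym2.mk_isDiag_iff]; exact huv⟩
  have hfpair : ∀ u v : V, f s(u, v) = G.dist u v := fun u v => rfl
  have hDeq : D = 2 := by
    obtain ⟨x, y, hxy⟩ := Fintype.exists_pair_of_one_lt_card (α := V) (by rw [hcard]; omega)
    obtain ⟨w⟩ := hconn x y
    obtain ⟨u, v, huv⟩ : ∃ u v : V, G.Adj u v := by
      cases w with
      | nil => exact absurd rfl hxy
      | cons h _ => exact ⟨_, _, h⟩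
    have hfq : f s(u, v) = 1 := by
      rw [hfpair, SimpleGraph.dist_eq_one_iff_adj]; exact huv
    have hqS : s(u, v) ∈ S := hmemS u v huv.ne
    by_cases hq : f s(u, v) = D
    · omega
    · have : s(u, v) ∈ B := Finset.mem_filter.2 ⟨hqS, hq⟩
      have := hallB _ this
      omega
  -- identify A = {p0}
  have hAeq : A = {p0} := by
    obtain ⟨q, hq⟩ := Finset.card_eq_one.1 hAcard
    rw [hq] at hp0A
    rw [hq, Finset.mem_singleton.1 hp0A]
  -- extract the unique distance-2 pair
  obtain ⟨a, b, hab_eq⟩ : ∃ a b : V, p0 = s(a, b) := by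
    induction p0 using Sym2.ind with
    | _ u v => exact ⟨u, v, rfl⟩
  have hab_ne : a ≠ b := by
    have := (Finset.mem_filter.1 hp0S).2
    rw [hab_eq, Sym2.mk_isDiag_iff] at this
    exact this
  have hdist_ab : G.dist a b = 2 := by
    have : f p0 = 2 := by rw [← hD, hDeq]
    rw [hab_eq] at this
    rw [← hfpair]; exact this
  -- adjacency characterization
  have hadj_iff : ∀ u v : V, G.Adj u v ↔ (u ≠ v ∧ s(u, v) ≠ s(a, b)) := by
    intro u v
    constructor
    · intro h
      refine ⟨h.ne, fun heq => ?_⟩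
      have h1 : G.dist u v = 1 := SimpleGraph.dist_eq_one_iff_adj.2 h
      have h2 : f s(u, v) = f s(a, b) := by rw [heq]
      rw [hfpair, hfpair, h1, hdist_ab] at h2
      omega
    · rintro ⟨huv, hne⟩
      have hqS : s(u, v) ∈ S := hmemS u v huv
      by_cases hq : f s(u, v) = D
      · exfalso
        have : s(u, v) ∈ A := Finset.mem_filter.2 ⟨hqS, hq⟩
        rw [hAeq, Finset.mem_singleton, hab_eq] at this
        exact hne this
      · have : s(u, v) ∈ B := Finset.mem_filter.2 ⟨hqS, hq⟩
        have h1 := hallB _ this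
        rw [hDeq] at h1
        rw [hfpair] at h1
        exact SimpleGraph.dist_eq_one_iff_adj.1 h1
  -- build the equivalence
  have e0 : V ≃ Fin n := Fintype.equivFinOfCardEq hcard
  have h01 : (0 : Fin n) ≠ 1 := by
    have : ((0 : Fin n) : ℕ) ≠ ((1 : Fin n) : ℕ) := by
      rw [Fin.val_zero, Fin.val_one', Nat.mod_eq_of_lt (by omega)]
      omega
    exact fun h => this (by rw [h])
  set σ : Equiv.Perm (Fin n) := Equiv.swap (e0 a) 0 with hσ
  set τ : Equiv.Perm (Fin n) := Equiv.swap (σ (e0 b)) 1 with hτ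
  have hσb0 : σ (e0 b) ≠ 0 := by
    intro h
    have h2 : σ (e0 a) = 0 := Equiv.swap_apply_left _ _
    exact hab_ne (e0.injective (σ.injective (h.trans h2.symm))).symm
  set e : V ≃ Fin n := e0.trans (σ.trans τ) with he
  have he_a : e a = 0 := by
    rw [he]
    simp only [Equiv.trans_apply]
    rw [hσ, Equiv.swap_apply_left, hτ]
    exact Equiv.swap_apply_of_ne_of_ne (Ne.symm hσb0) h01
  have he_b : e b = 1 := by
    rw [he]
    simp only [Equiv.trans_apply]
    rw [hτ, Equiv.swap_apply_left]
  refine ⟨⟨e, ?_⟩⟩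
  intro u v
  rw [KminusE]
  rw [SimpleGraph.deleteEdges_adj, SimpleGraph.top_adj, Set.mem_singleton_iff]
  rw [hadj_iff u v]
  rw [← he_a, ← he_b]
  constructor
  · rintro ⟨hne, hpair⟩
    refine ⟨fun h => hne (by rw [h]), fun h => hpair ?_⟩
    rw [Sym2.eq_iff] at h ⊢
    rcases h with ⟨h1, h2⟩ | ⟨h1, h2⟩
    · exact Or.inl ⟨by rw [h1], by rw [h2]⟩
    · exact Or.inr ⟨by rw [h1], by rw [h2]⟩
  · rintro ⟨hne, hpair⟩
    refine ⟨e.injective.ne hne, fun h => hpair ?_⟩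
    rw [Sym2.eq_iff] at h ⊢
    rcases h with ⟨h1, h2⟩ | ⟨h1, h2⟩
    · exact Or.inl ⟨e.injective h1, e.injective h2⟩
    · exact Or.inr ⟨e.injective h1, e.injective h2⟩
end

section
/- Let T be a tree of order n ≥ 3 with diameter D. Then for every integer k with 1 ≤ k < D, d_k(T) ≤ 2(n − D)·d_{k+1}(T). -/
set_option linter.unusedVariables false
set_option linter.unusedSectionVars false
set_option linter.unreachableTactic false
set_option linter.unusedTactic false
set_option linter.unnecessarySeqFocus false


namespace StmtAuxTree
open SimpleGraph Finset

section AuxTree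
variable {V : Type*} {T : SimpleGraph V}

variable {V : Type*} {T : SimpleGraph V}

/-- distance between vertices along a walk is at most index difference -/
lemma chain (hc : T.Connected) {x y : V} (w : T.Walk x y) :
    ∀ i d : ℕ, i + d ≤ w.length → T.dist (w.getVert i) (w.getVert (i + d)) ≤ d := by
  intro i d
  induction d with
  | zero => intro _; simp
  | succ m ih =>
    intro h
    have h1 : i + m < w.length := by omega
    have hadj : T.Adj (w.getVert (i + m)) (w.getVert (i + m + 1)) :=
      w.adj_getVert_succ h1
    have h2 : T.dist (w.getVert (i+m)) (w.getVert (i+m+1)) ≤ 1 := by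
      rw [SimpleGraph.dist_eq_one_iff_adj.mpr hadj]
    calc T.dist (w.getVert i) (w.getVert (i + (m+1)))
        ≤ T.dist (w.getVert i) (w.getVert (i+m)) +
          T.dist (w.getVert (i+m)) (w.getVert (i+m+1)) := by
          have := hc.dist_triangle (u := w.getVert i) (v := w.getVert (i+m))
            (w := w.getVert (i+m+1))
          rw [show i + (m+1) = i+m+1 from by omega]; exact this
      _ ≤ m + 1 := by have := ih (by omega); omega

lemma dist_getVert (hc : T.Connected) {x y : V} (w : T.Walk x y)
    (hw : w.length = T.dist x y) {i j : ℕ} (hij : i ≤ j) (hj : j ≤ w.length) :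
    T.dist (w.getVert i) (w.getVert j) = j - i ∧
      T.dist x (w.getVert i) = i ∧ T.dist (w.getVert j) y = w.length - j := by
  have h0 : T.dist (w.getVert 0) (w.getVert (0 + i)) ≤ i := chain hc w 0 i (by omega)
  have h1 : T.dist (w.getVert i) (w.getVert (i + (j - i))) ≤ j - i := chain hc w i (j-i) (by omega)
  have h2 : T.dist (w.getVert j) (w.getVert (j + (w.length - j))) ≤ w.length - j :=
    chain hc w j (w.length - j) (by omega)
  rw [show i + (j-i) = j from by omega] at h1
  rw [show j + (w.length - j) = w.length from by omega] at h2
  rw [show (0:ℕ) + i = i from by omega, w.getVert_zero] at h0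
  rw [w.getVert_length] at h2
  have t1 : T.dist x y ≤ T.dist x (w.getVert i) + T.dist (w.getVert i) y := hc.dist_triangle
  have t2 : T.dist (w.getVert i) y ≤ T.dist (w.getVert i) (w.getVert j) +
      T.dist (w.getVert j) y := hc.dist_triangle
  have t3 : T.dist x y ≤ T.dist x (w.getVert j) + T.dist (w.getVert j) y := hc.dist_triangle
  have t4 : T.dist x (w.getVert j) ≤ T.dist x (w.getVert i) +
      T.dist (w.getVert i) (w.getVert j) := hc.dist_triangle
  have h0' : T.dist x (w.getVert (0 + j)) ≤ j := chain hc w 0 j (by omega) |>.trans_eq' (by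
    rw [w.getVert_zero])
  rw [show (0:ℕ) + j = j from by omega] at h0'
  omega

/-- In a tree, distances from a fixed vertex to two adjacent vertices differ. -/
lemma dist_ne_of_adj (ht : T.IsTree) {b c : V} (h : T.Adj b c) (a : V) :
    T.dist a b ≠ T.dist a c := by
  have hc : T.Connected := ht.isConnected
  intro heq
  set m := T.dist a b with hm
  obtain ⟨A, hA, hAlen⟩ := hc.exists_path_of_dist a b
  obtain ⟨B, hB, hBlen⟩ := hc.exists_path_of_dist a c
  have hbB : b ∉ B.support := by
    intro hmem
    obtain ⟨s, hs, hsle⟩ := SimpleGraph.Walk.mem_support_iff_exists_getVert.mp hmem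
    have := dist_getVert hc B hBlen (le_refl s) hsle
    rw [hs] at this
    have hbc1 : 1 ≤ T.dist b c := by
      have := SimpleGraph.dist_eq_one_iff_adj.mpr h
      omega
    have h5 := dist_getVert hc B hBlen (i := s) (j := B.length) hsle (le_refl _)
    rw [hs, B.getVert_length] at h5
    omega
  -- build second path from a to b through c
  have P2 : T.Walk b a := SimpleGraph.Walk.cons h B.reverse
  have hP2path : (SimpleGraph.Walk.cons h B.reverse).IsPath := by
    apply SimpleGraph.Walk.IsPath.cons (hB.reverse)
    rwa [SimpleGraph.Walk.support_reverse, List.mem_reverse]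
  obtain ⟨p₀, _, huniq⟩ := ht.existsUnique_path b a
  have e1 : A.reverse = p₀ := huniq _ hA.reverse
  have e2 : SimpleGraph.Walk.cons h B.reverse = p₀ := huniq _ hP2path
  have : (A.reverse).length = (SimpleGraph.Walk.cons h B.reverse).length := by
    rw [e1, e2]
  rw [SimpleGraph.Walk.length_reverse, SimpleGraph.Walk.length_cons,
    SimpleGraph.Walk.length_reverse] at this
  omega

lemma step (ht : T.IsTree) {b c : V} (h : T.Adj b c) (a : V) :
    T.dist a c = T.dist a b + 1 ∨ T.dist a b = T.dist a c + 1 := by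
  have hc : T.Connected := ht.isConnected
  have h1 : T.dist a c ≤ T.dist a b + 1 := by
    have := hc.dist_triangle (u := a) (v := b) (w := c)
    have h2 : T.dist b c = 1 := SimpleGraph.dist_eq_one_iff_adj.mpr h
    omega
  have h2 : T.dist a b ≤ T.dist a c + 1 := by
    have := hc.dist_triangle (u := a) (v := c) (w := b)
    have h3 : T.dist c b = 1 := SimpleGraph.dist_eq_one_iff_adj.mpr h.symm
    omega
  have := dist_ne_of_adj ht h a
  omega


/-- no local maximum of distance along a shortest walk in a tree -/
lemma up_step (ht : T.IsTree) {x y : V} (w : T.Walk x y) (hw : w.length = T.dist x y)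
    (a : V) (t : ℕ) (h2 : t + 2 ≤ w.length)
    (hup : T.dist a (w.getVert (t+1)) = T.dist a (w.getVert t) + 1) :
    T.dist a (w.getVert (t+2)) = T.dist a (w.getVert (t+1)) + 1 := by
  have hc : T.Connected := ht.isConnected
  have hadj1 : T.Adj (w.getVert t) (w.getVert (t+1)) := w.adj_getVert_succ (by omega)
  have hadj2 : T.Adj (w.getVert (t+1)) (w.getVert (t+2)) := w.adj_getVert_succ (by omega)
  rcases step ht hadj2 a with h | h
  · exact h
  · exfalso
    set b₁ := w.getVert t
    set c := w.getVert (t+1)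
    set b₂ := w.getVert (t+2)
    have hdd : T.dist b₁ b₂ = 2 := by
      have h9 := (dist_getVert hc w hw (i := t) (j := t+2) (by omega) h2).1
      rw [show t + 2 - t = 2 from by omega] at h9
      exact h9
    have hne : b₁ ≠ b₂ := by
      intro he
      rw [he, SimpleGraph.Connected.dist_eq_zero_iff hc |>.mpr rfl] at hdd
      omega
    have hd2 : T.dist a b₂ = T.dist a b₁ := by omega
    obtain ⟨A, hA, hAlen⟩ := hc.exists_path_of_dist a b₁
    obtain ⟨B, hB, hBlen⟩ := hc.exists_path_of_dist a b₂
    have P₁ : T.Walk c a := SimpleGraph.Walk.cons hadj1.symm A.reverse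
    have hP₁ : (SimpleGraph.Walk.cons hadj1.symm A.reverse).IsPath := by
      apply SimpleGraph.Walk.isPath_of_length_eq_dist
      rw [SimpleGraph.Walk.length_cons, SimpleGraph.Walk.length_reverse, hAlen,
        SimpleGraph.dist_comm (u := c) (v := a)]
      omega
    have hP₂ : (SimpleGraph.Walk.cons hadj2 B.reverse).IsPath := by
      apply SimpleGraph.Walk.isPath_of_length_eq_dist
      rw [SimpleGraph.Walk.length_cons, SimpleGraph.Walk.length_reverse, hBlen,
        SimpleGraph.dist_comm (u := c) (v := a)]
      omega
    obtain ⟨p₀, _, huniq⟩ := ht.existsUnique_path c a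
    have e1 := huniq _ hP₁
    have e2 := huniq _ hP₂
    have e3 : (SimpleGraph.Walk.cons hadj1.symm A.reverse) =
        (SimpleGraph.Walk.cons hadj2 B.reverse) := by rw [e1, e2]
    have e4 := congrArg (fun q => SimpleGraph.Walk.getVert q 1) e3
    simp only [SimpleGraph.Walk.getVert_cons_succ, SimpleGraph.Walk.getVert_zero] at e4
    exact hne e4

/-- once increasing, always increasing -/
lemma up_run (ht : T.IsTree) {x y : V} (w : T.Walk x y) (hw : w.length = T.dist x y)
    (a : V) (t : ℕ)
    (hup : T.dist a (w.getVert (t+1)) = T.dist a (w.getVert t) + 1) :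
    ∀ m : ℕ, t + 1 + m ≤ w.length →
      T.dist a (w.getVert (t + 1 + m)) = T.dist a (w.getVert t) + 1 + m := by
  have hQ : ∀ m : ℕ, t + 1 + m ≤ w.length →
      T.dist a (w.getVert (t + 1 + m)) = T.dist a (w.getVert (t + m)) + 1 := by
    intro m
    induction m with
    | zero => intro _; simpa using hup
    | succ p ih =>
      intro h
      have h1 := ih (by omega)
      have h2 := up_step ht w hw a (t + p) (by omega) (by
        convert h1 using 3 <;> omega)
      rw [show t + 1 + (p+1) = t + p + 2 from by omega, show t + (p+1) = t + p + 1 from by omega]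
      exact h2
  intro m
  induction m with
  | zero => intro h; simpa using hup
  | succ p ih =>
    intro h
    have h1 := ih (by omega)
    have h2 := hQ (p+1) h
    rw [show t + (p+1) = t + 1 + p from by omega] at h2
    omega

/-- V-shape: distances from a vertex along a shortest walk in a tree -/
lemma vshape (ht : T.IsTree) {x y : V} (w : T.Walk x y) (hw : w.length = T.dist x y)
    (a : V) :
    ∃ t₀ ≤ w.length, ∀ t ≤ w.length,
      (t ≤ t₀ → T.dist a (w.getVert t) = T.dist a (w.getVert t₀) + (t₀ - t)) ∧
      (t₀ ≤ t → T.dist a (w.getVert t) = T.dist a (w.getVert t₀) + (t - t₀)) := by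
  have hc : T.Connected := ht.isConnected
  obtain ⟨t₀, ht₀mem, ht₀min⟩ := (Finset.range (w.length + 1)).exists_min_image
    (fun t => T.dist a (w.getVert t)) ⟨0, by simp⟩
  rw [Finset.mem_range] at ht₀mem
  have hmin : ∀ t ≤ w.length, T.dist a (w.getVert t₀) ≤ T.dist a (w.getVert t) := by
    intro t h; exact ht₀min t (Finset.mem_range.mpr (by omega))
  refine ⟨t₀, by omega, ?_⟩
  -- upward from t₀
  have hR : ∀ t, t₀ ≤ t → t ≤ w.length →
      T.dist a (w.getVert t) = T.dist a (w.getVert t₀) + (t - t₀) := by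
    intro t hle hlen
    rcases Nat.eq_or_lt_of_le hle with rfl | hlt
    · simp
    · have hup : T.dist a (w.getVert (t₀+1)) = T.dist a (w.getVert t₀) + 1 := by
        rcases step ht (w.adj_getVert_succ (show t₀ < w.length by omega)) a with h | h
        · exact h
        · have := hmin (t₀ + 1) (by omega); omega
      have := up_run ht w hw a t₀ hup (t - t₀ - 1) (by omega)
      rw [show t₀ + 1 + (t - t₀ - 1) = t from by omega] at this
      omega
  -- downward to t₀
  have hdown : ∀ t, t < t₀ → T.dist a (w.getVert t) = T.dist a (w.getVert (t+1)) + 1 := by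
    intro t hlt
    rcases step ht (w.adj_getVert_succ (show t < w.length by omega)) a with h | h
    · exfalso
      have := up_run ht w hw a t h (t₀ - t - 1) (by omega)
      rw [show t + 1 + (t₀ - t - 1) = t₀ from by omega] at this
      have := hmin t (by omega)
      omega
    · exact h
  have hL : ∀ m, m ≤ t₀ → T.dist a (w.getVert (t₀ - m)) = T.dist a (w.getVert t₀) + m := by
    intro m
    induction m with
    | zero => intro _; simp
    | succ p ih =>
      intro h
      have h1 := ih (by omega)
      have h2 := hdown (t₀ - (p+1)) (by omega)
      rw [show t₀ - (p+1) + 1 = t₀ - p from by omega] at h2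
      omega
  intro t htlen
  constructor
  · intro hle
    have := hL (t₀ - t) (by omega)
    rw [show t₀ - (t₀ - t) = t from by omega] at this
    exact this
  · intro hle; exact hR t hle htlen



variable [Fintype V] [DecidableEq V]

/-- eccentricity -/
noncomputable def eccA (T : SimpleGraph V) (x : V) : ℕ :=
  Finset.univ.sup (fun y => T.dist x y)

lemma dist_le_eccA (x y : V) : T.dist x y ≤ eccA T x :=
  Finset.le_sup (Finset.mem_univ y)

lemma eccA_exists [Nonempty V] (x : V) : ∃ y, eccA T x = T.dist x y := by
  obtain ⟨y, _, hy⟩ := Finset.exists_mem_eq_sup (Finset.univ : Finset V)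
    Finset.univ_nonempty (fun y => T.dist x y)
  exact ⟨y, hy⟩

/-- rank: lexicographic (eccentricity, vertex id) -/
noncomputable def rankA (T : SimpleGraph V) (x : V) : ℕ :=
  eccA T x * (Fintype.card V) + ((Fintype.equivFin V) x : ℕ)

lemma rankA_inj {x y : V} (h : rankA T x = rankA T y) : x = y := by
  have hx : ((Fintype.equivFin V) x : ℕ) < Fintype.card V := ((Fintype.equivFin V) x).isLt
  have hy : ((Fintype.equivFin V) y : ℕ) < Fintype.card V := ((Fintype.equivFin V) y).isLt
  have h2 := congrArg (· % (Fintype.card V)) h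
  simp only [rankA, Nat.mul_add_mod'] at h2
  rw [Nat.mod_eq_of_lt hx, Nat.mod_eq_of_lt hy] at h2
  have : (Fintype.equivFin V) x = (Fintype.equivFin V) y := Fin.ext h2
  exact (Fintype.equivFin V).injective this

lemma rankA_lt_of_ecc_lt {x y : V} (h : eccA T x < eccA T y) : rankA T x < rankA T y := by
  have hx : ((Fintype.equivFin V) x : ℕ) < Fintype.card V := ((Fintype.equivFin V) x).isLt
  have h2 : (eccA T x + 1) * Fintype.card V ≤ eccA T y * Fintype.card V :=
    Nat.mul_le_mul_right _ h
  calc rankA T x < (eccA T x + 1) * Fintype.card V := by rw [rankA]; nlinarith [hx]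
    _ ≤ eccA T y * Fintype.card V := h2
    _ ≤ rankA T y := Nat.le_add_right _ _

lemma ecc_le_of_rank_le {x y : V} (h : rankA T y ≤ rankA T x) : eccA T y ≤ eccA T x := by
  by_contra hcon
  exact absurd h (not_le.mpr (rankA_lt_of_ecc_lt (by omega)))

/-- canonical vertex at distance k+1 -/
noncomputable def zA (T : SimpleGraph V) (k : ℕ) (a : V) : V :=
  if h : ∃ c, T.dist a c = k + 1 then h.choose else a

lemma zA_spec [Nonempty V] (hc : T.Connected) {k : ℕ} {a : V} (hk : k + 1 ≤ eccA T a) :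
    T.dist a (zA T k a) = k + 1 := by
  obtain ⟨w₀, hw₀⟩ := eccA_exists (T := T) a
  obtain ⟨B, hBpath, hBlen⟩ := hc.exists_path_of_dist a w₀
  have hle : k + 1 ≤ B.length := by rw [hBlen, ← hw₀]; exact hk
  have := (dist_getVert hc B hBlen (i := k+1) (j := B.length) hle (le_refl _)).2.1
  have hex : ∃ c, T.dist a c = k + 1 := ⟨_, this⟩
  simp only [zA, dif_pos hex]
  exact hex.choose_spec

/-- the map from distance-k pairs to distance-(k+1) pairs -/
noncomputable def FA (T : SimpleGraph V) (k : ℕ) : Sym2 V → Sym2 V :=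
  Sym2.lift ⟨fun x y => if rankA T y ≤ rankA T x then s(x, zA T k x) else s(y, zA T k y), by
    intro x y
    dsimp only
    by_cases h1 : rankA T y ≤ rankA T x <;> by_cases h2 : rankA T x ≤ rankA T y
    · have : x = y := rankA_inj (le_antisymm h2 h1)
      subst this; simp
    · simp only [if_pos h1, if_neg h2]
    · simp only [if_neg h1, if_pos h2]
    · exact absurd (le_total (rankA T y) (rankA T x)) (by simp [h1, h2])⟩

lemma FA_mk (x y : V) (k : ℕ) : FA T k s(x, y) =
    if rankA T y ≤ rankA T x then s(x, zA T k x) else s(y, zA T k y) := by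
  simp [FA]

end AuxTree

set_option maxHeartbeats 1000000 in
theorem stmt_3_aux {V : Type*} [Fintype V] [DecidableEq V] (T : SimpleGraph V) (n D : ℕ)
    (htree : T.IsTree) (hcard : Fintype.card V = n) (hn : 3 ≤ n)
    (hD : T.diam = D) (k : ℕ) (hk1 : 1 ≤ k) (hkD : k < D) :
    (((Finset.univ : Finset V).sym2.filter (fun p => ¬ p.IsDiag)).filter
      (fun p => Sym2.lift ⟨fun u v => T.dist u v, fun u v => SimpleGraph.dist_comm⟩ p = k)).card
    ≤ 2 * (n - D) *
    (((Finset.univ : Finset V).sym2.filter (fun p => ¬ p.IsDiag)).filter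
      (fun p => Sym2.lift ⟨fun u v => T.dist u v, fun u v => SimpleGraph.dist_comm⟩ p = k+1)).card
    := by
  have hc : T.Connected := htree.isConnected
  have hnev : Nonempty V := Fintype.card_pos_iff.mp (by omega)
  have hDne : T.diam ≠ 0 := by omega
  have hetop : T.ediam ≠ ⊤ := SimpleGraph.ediam_ne_top_of_diam_ne_zero hDne
  have hdle : ∀ x y : V, T.dist x y ≤ D := fun x y => hD ▸ SimpleGraph.dist_le_diam hetop
  obtain ⟨p, q, hpq⟩ := SimpleGraph.exists_dist_eq_diam (G := T)
  rw [hD] at hpq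
  obtain ⟨W, hWpath, hWlen⟩ := hc.exists_path_of_dist p q
  have hWD : W.length = D := by rw [hWlen, hpq]
  have hdistu : ∀ i j, i ≤ j → j ≤ D → T.dist (W.getVert i) (W.getVert j) = j - i :=
    fun i j hij hj => (dist_getVert hc W hWlen hij (by omega)).1
  have hdistup : ∀ i, i ≤ D → T.dist p (W.getVert i) = i := fun i hi =>
    (dist_getVert hc W hWlen (le_refl i) (by omega)).2.1
  have hdistuq : ∀ i, i ≤ D → T.dist (W.getVert i) q = D - i := fun i hi => by
    have := (dist_getVert hc W hWlen (le_refl i) (show i ≤ W.length by omega)).2.2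
    rwa [hWD] at this
  have heccle : ∀ x, eccA T x ≤ D := fun x => Finset.sup_le (fun y _ => hdle x y)
  -- eccentricity of path vertices
  have heccux : ∀ i, i ≤ D → eccA T (W.getVert i) ≤ max i (D - i) := by
    intro i hi
    apply Finset.sup_le
    intro x _
    obtain ⟨t₀, ht₀, hV⟩ := vshape htree W hWlen x
    have e0 := (hV 0 (by omega)).1 (by omega)
    have eD := (hV W.length (le_refl _)).2 ht₀
    rw [W.getVert_zero] at e0
    rw [W.getVert_length] at eD
    have hxp : T.dist x p ≤ D := hdle x p
    have hxq : T.dist x q ≤ D := hdle x q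
    have hcomm : T.dist (W.getVert i) x = T.dist x (W.getVert i) := SimpleGraph.dist_comm ..
    rcases le_total i t₀ with hle | hle
    · have := (hV i (by omega)).1 hle
      have hgoal : T.dist x (W.getVert i) ≤ D - i := by omega
      rw [hcomm]; omega
    · have := (hV i (by omega)).2 hle
      have hgoal : T.dist x (W.getVert i) ≤ i := by omega
      rw [hcomm]; omega
  -- Claim A
  have claimA : ∀ x y : V, T.dist x y = k → k + 1 ≤ max (eccA T x) (eccA T y) := by
    intro x y hxy
    by_contra hcon
    push_neg at hcon
    have hex : eccA T x ≤ k := by omega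
    have hey : eccA T y ≤ k := by omega
    obtain ⟨R, hRpath, hRlen⟩ := hc.exists_path_of_dist x y
    have hRk : R.length = k := by rw [hRlen, hxy]
    obtain ⟨t₀, ht₀, hVp⟩ := vshape htree R hRlen p
    obtain ⟨t₁, ht₁, hVq⟩ := vshape htree R hRlen q
    have e0 := (hVp 0 (by omega)).1 (by omega)
    have eL := (hVp R.length (le_refl _)).2 ht₀
    have f0 := (hVq 0 (by omega)).1 (by omega)
    have fL := (hVq R.length (le_refl _)).2 ht₁
    rw [R.getVert_zero] at e0 f0
    rw [R.getVert_length] at eL fL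
    have hpx : T.dist p x ≤ k := le_trans (le_of_eq (SimpleGraph.dist_comm ..)) (le_trans (dist_le_eccA x p) hex)
    have hpy : T.dist p y ≤ k := le_trans (le_of_eq (SimpleGraph.dist_comm ..)) (le_trans (dist_le_eccA y p) hey)
    have hqx : T.dist q x ≤ k := le_trans (le_of_eq (SimpleGraph.dist_comm ..)) (le_trans (dist_le_eccA x q) hex)
    have hqy : T.dist q y ≤ k := le_trans (le_of_eq (SimpleGraph.dist_comm ..)) (le_trans (dist_le_eccA y q) hey)
    have htri : T.dist p q ≤ T.dist p (R.getVert t₁) + T.dist q (R.getVert t₁) := by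
      have h1 := hc.dist_triangle (u := p) (v := R.getVert t₁) (w := q)
      have h2 : T.dist (R.getVert t₁) q = T.dist q (R.getVert t₁) := SimpleGraph.dist_comm ..
      omega
    rcases le_total t₁ t₀ with hle | hle
    · have := (hVp t₁ (by omega)).1 hle
      omega
    · have := (hVp t₁ (by omega)).2 hle
      omega
  -- the bad sets
  have claimD : ∀ a : V,
      ((Finset.univ : Finset V).filter
        (fun y => T.dist a y = k ∧ rankA T y ≤ rankA T a)).card ≤ n - D := by
    intro a
    set Y : Finset V := (Finset.univ : Finset V).filter
        (fun y => T.dist a y = k ∧ rankA T y ≤ rankA T a) with hYdef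
    have hmemY : ∀ y, y ∈ Y ↔ (T.dist a y = k ∧ rankA T y ≤ rankA T a) := by
      intro y; rw [hYdef, Finset.mem_filter]; simp
    set U : Finset V := (Finset.range (D+1)).image W.getVert with hUdef
    have hmemU : ∀ y, y ∈ U ↔ ∃ j, j ≤ D ∧ W.getVert j = y := by
      intro y
      rw [hUdef, Finset.mem_image]
      constructor
      · rintro ⟨j, hj, hjy⟩; exact ⟨j, by have := Finset.mem_range.mp hj; omega, hjy⟩
      · rintro ⟨j, hj, hjy⟩; exact ⟨j, Finset.mem_range.mpr (by omega), hjy⟩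
    have huinj : Set.InjOn W.getVert (Finset.range (D+1)) := by
      intro i hi j hj hij
      simp only [Finset.coe_range, Set.mem_Iio] at hi hj
      rcases le_total i j with h | h
      · have := hdistu i j h (by omega)
        rw [hij, SimpleGraph.Connected.dist_eq_zero_iff hc |>.mpr rfl] at this
        omega
      · have := hdistu j i h (by omega)
        rw [hij, SimpleGraph.Connected.dist_eq_zero_iff hc |>.mpr rfl] at this
        omega
    have hUcard : U.card = D + 1 := by
      rw [hUdef, Finset.card_image_of_injOn (by simpa using huinj), Finset.card_range]
    have hUD : D + 1 ≤ n := by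
      rw [← hUcard, ← hcard]; exact Finset.card_le_univ U
    have hsplit : (Y ∩ U).card + (Y \ U).card = Y.card :=
      Finset.card_inter_add_card_sdiff Y U
    have haY : a ∉ Y := by
      rw [hmemY]
      rw [SimpleGraph.dist_self]
      omega
    by_cases ha : a ∈ U
    · obtain ⟨i, hi, hia⟩ := (hmemU a).mp ha
      have hecca : eccA T a ≤ max i (D - i) := by rw [← hia]; exact heccux i hi
      have h1 : (Y ∩ U).card ≤ 1 := by
        rcases le_total (2*i) D with hside | hside
        · have hsub : Y ∩ U ⊆ {W.getVert (i+k)} := by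
            intro y hy
            obtain ⟨hyY, hyU⟩ := Finset.mem_inter.mp hy
            obtain ⟨hdist, hrank⟩ := (hmemY y).mp hyY
            obtain ⟨j, hj, rfl⟩ := (hmemU y).mp hyU
            have heccj : eccA T (W.getVert j) ≤ eccA T a := ecc_le_of_rank_le hrank
            rcases le_total j i with hji | hji
            · exfalso
              have hd1 : T.dist (W.getVert j) (W.getVert i) = i - j := hdistu j i hji hi
              have hd2 : T.dist a (W.getVert j) = T.dist (W.getVert j) (W.getVert i) := by
                rw [hia, SimpleGraph.dist_comm]
              have hq1 : T.dist (W.getVert j) q ≤ eccA T (W.getVert j) := dist_le_eccA ..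
              have hq2 : T.dist (W.getVert j) q = D - j := hdistuq j (by omega)
              omega
            · have hd1 : T.dist (W.getVert i) (W.getVert j) = j - i := hdistu i j hji hj
              have hd2 : T.dist a (W.getVert j) = T.dist (W.getVert i) (W.getVert j) := by
                rw [hia]
              have : j = i + k := by omega
              rw [this]
              exact Finset.mem_singleton_self _
          calc (Y ∩ U).card ≤ _ := Finset.card_le_card hsub
            _ ≤ 1 := by simp
        · have hsub : Y ∩ U ⊆ {W.getVert (i-k)} := by
            intro y hy
            obtain ⟨hyY, hyU⟩ := Finset.mem_inter.mp hy
            obtain ⟨hdist, hrank⟩ := (hmemY y).mp hyY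
            obtain ⟨j, hj, rfl⟩ := (hmemU y).mp hyU
            have heccj : eccA T (W.getVert j) ≤ eccA T a := ecc_le_of_rank_le hrank
            rcases le_total j i with hji | hji
            · have hd1 : T.dist (W.getVert j) (W.getVert i) = i - j := hdistu j i hji hi
              have hd2 : T.dist a (W.getVert j) = T.dist (W.getVert j) (W.getVert i) := by
                rw [hia, SimpleGraph.dist_comm]
              have : j = i - k := by omega
              rw [this]
              exact Finset.mem_singleton_self _
            · exfalso
              have hd1 : T.dist (W.getVert i) (W.getVert j) = j - i := hdistu i j hji hj
              have hd2 : T.dist a (W.getVert j) = T.dist (W.getVert i) (W.getVert j) := by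
                rw [hia]
              have hp1 : T.dist (W.getVert j) p ≤ eccA T (W.getVert j) := dist_le_eccA ..
              have hp2 : T.dist p (W.getVert j) = j := hdistup j hj
              have hp3 : T.dist (W.getVert j) p = T.dist p (W.getVert j) := SimpleGraph.dist_comm ..
              omega
          calc (Y ∩ U).card ≤ _ := Finset.card_le_card hsub
            _ ≤ 1 := by simp
      have h2 : (Y \ U).card ≤ n - (D+1) := by
        have hsub : Y \ U ⊆ Finset.univ \ U := by
          intro y hy
          rw [Finset.mem_sdiff] at hy ⊢
          exact ⟨Finset.mem_univ y, hy.2⟩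
        calc (Y \ U).card ≤ _ := Finset.card_le_card hsub
          _ = n - (D+1) := by
            rw [Finset.card_sdiff_of_subset (Finset.subset_univ U), hUcard, ← hcard]
            rfl
      omega
    · have hD2 : D + 2 ≤ n := by
        have : (insert a U).card = D + 2 := by
          rw [Finset.card_insert_of_notMem ha, hUcard]
        rw [← this, ← hcard]
        exact Finset.card_le_univ _
      obtain ⟨t₀, ht₀, hV⟩ := vshape htree W hWlen a
      rw [hWD] at ht₀
      have h1 : (Y ∩ U).card ≤ 2 := by
        set c := T.dist a (W.getVert t₀) with hcdef
        have hsub : Y ∩ U ⊆ {W.getVert (t₀ - (k - c)), W.getVert (t₀ + (k - c))} := by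
          intro y hy
          obtain ⟨hyY, hyU⟩ := Finset.mem_inter.mp hy
          obtain ⟨hdist, hrank⟩ := (hmemY y).mp hyY
          obtain ⟨j, hj, rfl⟩ := (hmemU y).mp hyU
          rcases le_total j t₀ with hji | hji
          · have := (hV j (by omega)).1 hji
            have hje : j = t₀ - (k - c) := by omega
            rw [hje]
            exact Finset.mem_insert_self _ _
          · have := (hV j (by omega)).2 hji
            have hje : j = t₀ + (k - c) := by omega
            rw [hje]
            exact Finset.mem_insert_of_mem (Finset.mem_singleton_self _)
        calc (Y ∩ U).card ≤ _ := Finset.card_le_card hsub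
          _ ≤ 2 := by
            apply le_trans (Finset.card_insert_le _ _)
            simp
      have h2 : (Y \ U).card ≤ n - (D+2) := by
        have hsub : Y \ U ⊆ Finset.univ \ (insert a U) := by
          intro y hy
          rw [Finset.mem_sdiff] at hy ⊢
          refine ⟨Finset.mem_univ y, ?_⟩
          rw [Finset.mem_insert]
          rintro (rfl | hyU)
          · exact haY hy.1
          · exact hy.2 hyU
        calc (Y \ U).card ≤ _ := Finset.card_le_card hsub
          _ = n - (D+2) := by
            rw [Finset.card_sdiff_of_subset (Finset.subset_univ _), Finset.card_insert_of_notMem ha,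
              hUcard, ← hcard]
            rfl
      omega
  -- mapping properties
  have hmemA : ∀ (x y : V) (i : ℕ), s(x,y) ∈ Finset.filter
      (fun p => Sym2.lift ⟨fun u v => T.dist u v, fun u v => SimpleGraph.dist_comm⟩ p = i)
      (Finset.filter (fun p => ¬ p.IsDiag) (Finset.univ : Finset V).sym2) ↔
      (x ≠ y ∧ T.dist x y = i) := by
    intro x y i
    rw [Finset.mem_filter, Finset.mem_filter]
    simp [Finset.mk_mem_sym2_iff, Sym2.mk_isDiag_iff, Sym2.lift_mk]
  have hmaps : ∀ e ∈ Finset.filter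
      (fun p => Sym2.lift ⟨fun u v => T.dist u v, fun u v => SimpleGraph.dist_comm⟩ p = k)
      (Finset.filter (fun p => ¬ p.IsDiag) (Finset.univ : Finset V).sym2),
      FA T k e ∈ Finset.filter
      (fun p => Sym2.lift ⟨fun u v => T.dist u v, fun u v => SimpleGraph.dist_comm⟩ p = k+1)
      (Finset.filter (fun p => ¬ p.IsDiag) (Finset.univ : Finset V).sym2) := by
    intro e he
    induction e using Sym2.ind with
    | _ x y =>
      obtain ⟨hne, hdxy⟩ := (hmemA x y k).mp he
      rw [FA_mk]
      by_cases hr : rankA T y ≤ rankA T x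
      · rw [if_pos hr]
        have hecc : k + 1 ≤ eccA T x := by
          have h1 := claimA x y hdxy
          have h2 : eccA T y ≤ eccA T x := ecc_le_of_rank_le hr
          rw [max_eq_left h2] at h1
          exact h1
        have hz := zA_spec (T := T) hc hecc
        rw [hmemA]
        refine ⟨?_, hz⟩
        intro heq
        rw [← heq, SimpleGraph.dist_self] at hz
        omega
      · rw [if_neg hr]
        have hecc : k + 1 ≤ eccA T y := by
          have h1 := claimA x y hdxy
          have h2 : eccA T x ≤ eccA T y := ecc_le_of_rank_le (le_of_lt (not_le.mp hr))
          rw [max_eq_right h2] at h1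
          exact h1
        have hz := zA_spec (T := T) hc hecc
        rw [hmemA]
        refine ⟨?_, hz⟩
        intro heq
        rw [← heq, SimpleGraph.dist_self] at hz
        omega
  have hfib : ∀ e' ∈ Finset.filter
      (fun p => Sym2.lift ⟨fun u v => T.dist u v, fun u v => SimpleGraph.dist_comm⟩ p = k+1)
      (Finset.filter (fun p => ¬ p.IsDiag) (Finset.univ : Finset V).sym2),
      ((Finset.filter
        (fun p => Sym2.lift ⟨fun u v => T.dist u v, fun u v => SimpleGraph.dist_comm⟩ p = k)
        (Finset.filter (fun p => ¬ p.IsDiag) (Finset.univ : Finset V).sym2)).filter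
        (fun e => FA T k e = e')).card ≤ 2 * (n - D) := by
    intro e' he'
    induction e' using Sym2.ind with
    | _ a b =>
      have hsub : (Finset.filter
        (fun p => Sym2.lift ⟨fun u v => T.dist u v, fun u v => SimpleGraph.dist_comm⟩ p = k)
        (Finset.filter (fun p => ¬ p.IsDiag) (Finset.univ : Finset V).sym2)).filter
        (fun e => FA T k e = s(a,b)) ⊆
        (((Finset.univ : Finset V).filter
          (fun y => T.dist a y = k ∧ rankA T y ≤ rankA T a)).image (fun t => s(a,t))) ∪
        (((Finset.univ : Finset V).filter
          (fun y => T.dist b y = k ∧ rankA T y ≤ rankA T b)).image (fun t => s(b,t))) := by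
        intro e he
        induction e using Sym2.ind with
        | _ x y =>
          rw [Finset.mem_filter] at he
          obtain ⟨heA, heF⟩ := he
          obtain ⟨hne, hdxy⟩ := (hmemA x y k).mp heA
          rw [FA_mk] at heF
          by_cases hr : rankA T y ≤ rankA T x
          · rw [if_pos hr] at heF
            rcases Sym2.eq_iff.mp heF with ⟨h1, h2⟩ | ⟨h1, h2⟩
            · apply Finset.mem_union_left
              rw [Finset.mem_image]
              exact ⟨y, Finset.mem_filter.mpr ⟨Finset.mem_univ y, h1 ▸ hdxy, h1 ▸ hr⟩,
                by rw [h1]⟩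
            · apply Finset.mem_union_right
              rw [Finset.mem_image]
              exact ⟨y, Finset.mem_filter.mpr ⟨Finset.mem_univ y, h1 ▸ hdxy, h1 ▸ hr⟩,
                by rw [h1]⟩
          · rw [if_neg hr] at heF
            have hr' : rankA T x ≤ rankA T y := le_of_lt (not_le.mp hr)
            have hdyx : T.dist y x = k := by rw [SimpleGraph.dist_comm]; exact hdxy
            rcases Sym2.eq_iff.mp heF with ⟨h1, h2⟩ | ⟨h1, h2⟩
            · apply Finset.mem_union_left
              rw [Finset.mem_image]
              refine ⟨x, Finset.mem_filter.mpr ⟨Finset.mem_univ x, h1 ▸ hdyx, h1 ▸ hr'⟩, ?_⟩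
              rw [h1.symm, Sym2.eq_swap]
            · apply Finset.mem_union_right
              rw [Finset.mem_image]
              refine ⟨x, Finset.mem_filter.mpr ⟨Finset.mem_univ x, h1 ▸ hdyx, h1 ▸ hr'⟩, ?_⟩
              rw [h1.symm, Sym2.eq_swap]
      refine le_trans (Finset.card_le_card hsub) ?_
      refine le_trans (Finset.card_union_le _ _) ?_
      have i1 := Finset.card_image_le (f := fun t : V => s(a,t)) (s := (Finset.univ : Finset V).filter
          (fun y => T.dist a y = k ∧ rankA T y ≤ rankA T a))
      have i2 := Finset.card_image_le (f := fun t : V => s(b,t)) (s := (Finset.univ : Finset V).filter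
          (fun y => T.dist b y = k ∧ rankA T y ≤ rankA T b))
      have j1 := claimD a
      have j2 := claimD b
      omega
  exact Finset.card_le_mul_card_image_of_maps_to hmaps (2*(n-D)) hfib

end StmtAuxTree

/-- For a tree of order `n ≥ 3` with diameter `D`, and `1 ≤ k < D`,
`d_k(T) ≤ 2(n - D) d_{k+1}(T)`. -/
theorem stmt_3 {V : Type*} [Fintype V] [DecidableEq V] (T : SimpleGraph V) (n D : ℕ)
    (htree : T.IsTree) (hcard : Fintype.card V = n) (hn : 3 ≤ n)
    (hD : T.diam = D) (k : ℕ) (hk1 : 1 ≤ k) (hkD : k < D) :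
    distCount T k ≤ 2 * (n - D) * distCount T (k + 1) := by
  have h := StmtAuxTree.stmt_3_aux T n D htree hcard hn hD k hk1 hkD
  simpa [distCount] using h
end

section
/- Let T be a tree of order n ≥ 5 with diameter D. Then for every integer k with 1 ≤ k < D, d_k(T) ≤ 2(n − 4)·d_{k+1}(T). -/
set_option linter.unusedVariables false

open SimpleGraph Finset

namespace StmtAux

variable {V : Type*} {G : SimpleGraph V}

/-- Take the first `n` darts of a walk. -/
def takeW : {u v : V} → (p : G.Walk u v) → (n : ℕ) → G.Walk u (p.getVert n)
  | _, _, Walk.nil, _ => Walk.nil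
  | _, _, Walk.cons h q, 0 => Walk.nil.copy rfl ((Walk.cons h q).getVert_zero).symm
  | _, _, Walk.cons h q, (n+1) => (Walk.cons h (takeW q n)).copy rfl rfl

lemma length_takeW : ∀ {u v : V} (p : G.Walk u v) (n : ℕ), (takeW p n).length = min n p.length
  | _, _, Walk.nil, n => by simp [takeW]
  | _, _, Walk.cons h q, 0 => by simp [takeW]
  | _, _, Walk.cons h q, (n+1) => by
      simp [takeW, length_takeW q n, Nat.succ_min_succ]

lemma getVert_drop (p : G.Walk u v) (n m : ℕ) :
    (p.drop n).getVert m = p.getVert (n + m) := by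
  induction p generalizing n with
  | nil => cases n <;> rfl
  | cons h q ih =>
    cases n with
    | zero => simp [Walk.drop]
    | succ n =>
      simp only [Walk.drop, Walk.getVert_copy, Walk.getVert_cons_succ]
      rw [show n + 1 + m = (n + m) + 1 by omega, Walk.getVert_cons_succ]
      exact ih n

lemma length_drop (p : G.Walk u v) (n : ℕ) :
    (p.drop n).length = p.length - n := by
  induction p generalizing n with
  | nil => cases n <;> simp [Walk.drop]
  | cons h q ih =>
    cases n with
    | zero => simp [Walk.drop]
    | succ n => simpa [Walk.drop] using ih n

lemma dist_getVert_le (p : G.Walk u v) (n : ℕ) :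
    G.dist u (p.getVert n) ≤ n :=
  le_trans (SimpleGraph.dist_le (takeW p n)) (by rw [length_takeW]; exact min_le_left _ _)

lemma dist_getVert_le' (p : G.Walk u v) (n : ℕ) :
    G.dist (p.getVert n) v ≤ p.length - n := by
  have := SimpleGraph.dist_le (p.drop n)
  rwa [length_drop] at this

lemma shortest_getVert (hc : G.Connected) (p : G.Walk u v) (hp : p.length = G.dist u v)
    (n : ℕ) (hn : n ≤ p.length) :
    G.dist u (p.getVert n) = n ∧ G.dist (p.getVert n) v = p.length - n := by
  have h1 := dist_getVert_le p n
  have h2 := dist_getVert_le' p n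
  have h3 := hc.dist_triangle (u := u) (v := p.getVert n) (w := v)
  omega

lemma shortest_drop_shortest (hc : G.Connected) (p : G.Walk u v) (hp : p.length = G.dist u v)
    (n : ℕ) (hn : n ≤ p.length) : (p.drop n).length = G.dist (p.getVert n) v := by
  rw [length_drop]
  exact ((shortest_getVert hc p hp n hn).2).symm

lemma dist_getVert_getVert (hc : G.Connected) (p : G.Walk u v) (hp : p.length = G.dist u v)
    {i j : ℕ} (hij : i ≤ j) (hj : j ≤ p.length) :
    G.dist (p.getVert i) (p.getVert j) = j - i := by
  have hd := shortest_drop_shortest hc p hp i (le_trans hij hj)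
  have := (shortest_getVert hc (p.drop i) hd (j - i) (by rw [length_drop]; omega)).1
  rwa [getVert_drop, Nat.add_sub_cancel' hij] at this

lemma exists_dist_eq (hc : G.Connected) {u v : V} {m : ℕ} (hm : m ≤ G.dist u v) :
    ∃ w, G.dist u w = m ∧ G.dist w v = G.dist u v - m := by
  obtain ⟨p, hp⟩ := hc.exists_walk_length_eq_dist u v
  obtain ⟨h1, h2⟩ := shortest_getVert hc p hp m (by omega)
  exact ⟨p.getVert m, h1, by rw [h2, hp]⟩

lemma exists_shortest_path (hc : G.Connected) (u v : V) :
    ∃ p : G.Walk u v, p.IsPath ∧ p.length = G.dist u v := by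
  obtain ⟨p, hp⟩ := hc.exists_walk_length_eq_dist u v
  exact ⟨p, p.isPath_of_length_eq_dist hp, hp⟩


section Tree

lemma path_length_eq_dist (ht : G.IsTree) {u v : V} (p : G.Walk u v) (hp : p.IsPath) :
    p.length = G.dist u v := by
  obtain ⟨q, hq, hql⟩ := exists_shortest_path ht.isConnected u v
  rw [(ht.existsUnique_path u v).unique hp hq, hql]

lemma adj_toward_unique (ht : G.IsTree) {z v w₁ w₂ : V}
    (h₁ : G.Adj v w₁) (h₂ : G.Adj v w₂)
    (hd₁ : G.dist z w₁ + 1 = G.dist z v) (hd₂ : G.dist z w₂ + 1 = G.dist z v) :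
    w₁ = w₂ := by
  classical
  have key : ∀ w, G.Adj v w → G.dist z w + 1 = G.dist z v →
      ∃ p : G.Walk v z, p.IsPath ∧ p.getVert 1 = w := by
    intro w hw hd
    obtain ⟨p, hp, hpl⟩ := exists_shortest_path ht.isConnected z w
    have hv : v ∉ p.support := by
      intro hv
      have hdl : G.dist z v ≤ (p.takeUntil v hv).length := SimpleGraph.dist_le _
      have h2 := Walk.length_takeUntil_le p hv
      omega
    refine ⟨Walk.cons hw p.reverse,
      hp.reverse.cons (by rwa [Walk.support_reverse, List.mem_reverse]), ?_⟩
    exact Walk.snd_cons _ _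
  obtain ⟨p₁, hp₁, hg₁⟩ := key w₁ h₁ hd₁
  obtain ⟨p₂, hp₂, hg₂⟩ := key w₂ h₂ hd₂
  rw [← hg₁, ← hg₂, (ht.existsUnique_path v z).unique hp₁ hp₂]

lemma adj_dist_step (ht : G.IsTree) {u v : V} (h : G.Adj u v) (z : V) :
    G.dist z v = G.dist z u + 1 ∨ G.dist z u = G.dist z v + 1 := by
  classical
  have hc := ht.isConnected
  have hne : G.dist z u ≠ G.dist z v := by
    intro heq
    obtain ⟨q, hq, hql⟩ := exists_shortest_path hc z v
    by_cases hu : u ∈ q.support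
    · have h1 : G.dist z u ≤ (q.takeUntil u hu).length := SimpleGraph.dist_le _
      have h2 : G.dist u v ≤ (q.dropUntil u hu).length := SimpleGraph.dist_le _
      have h3 : (q.takeUntil u hu).length + (q.dropUntil u hu).length = q.length := by
        have := congrArg Walk.length (q.take_spec hu)
        rwa [Walk.length_append] at this
      have h4 : G.dist u v = 1 := SimpleGraph.dist_eq_one_iff_adj.mpr h
      omega
    · have hR : (Walk.cons h q.reverse).IsPath :=
        hq.reverse.cons (by rwa [Walk.support_reverse, List.mem_reverse])
      have hh := path_length_eq_dist ht _ hR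
      rw [Walk.length_cons, Walk.length_reverse] at hh
      have hcomm : G.dist u z = G.dist z u := SimpleGraph.dist_comm
      omega
  have h4 : G.dist u v = 1 := SimpleGraph.dist_eq_one_iff_adj.mpr h
  have h5 : G.dist v u = 1 := SimpleGraph.dist_eq_one_iff_adj.mpr h.symm
  have t1 : G.dist z v ≤ G.dist z u + G.dist u v := hc.dist_triangle
  have t2 : G.dist z u ≤ G.dist z v + G.dist v u := hc.dist_triangle
  omega

lemma farthest_nbr_unique (ht : G.IsTree) {z b : V} (hfar : ∀ w, G.dist b w ≤ G.dist b z)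
    {w₁ w₂ : V} (h₁ : G.Adj z w₁) (h₂ : G.Adj z w₂) : w₁ = w₂ := by
  have k : ∀ w, G.Adj z w → G.dist b w + 1 = G.dist b z := by
    intro w hw
    rcases adj_dist_step ht hw b with hh | hh
    · have := hfar w; omega
    · omega
  exact adj_toward_unique ht (z := b) h₁ h₂ (k w₁ h₁) (k w₂ h₂)

lemma leaf_dist (ht : G.IsTree) {z m : V} (hm : G.Adj z m)
    (huniq : ∀ w, G.Adj z w → w = m) {v : V} (hv : v ≠ z) :
    G.dist z v = G.dist m v + 1 := by
  have hc := ht.isConnected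
  have hd0 : G.dist z v ≠ 0 := by
    intro h0; exact hv ((hc.dist_eq_zero_iff.mp h0).symm)
  obtain ⟨p, hpl⟩ := hc.exists_walk_length_eq_dist z v
  have hnn : ¬ p.Nil := by rw [Walk.nil_iff_length_eq]; omega
  have h1 : G.Adj z (p.getVert 1) := p.adj_snd hnn
  have h2 := huniq _ h1
  have h3 : G.dist (p.getVert 1) v ≤ p.length - 1 := dist_getVert_le' p 1
  have t : G.dist z v ≤ G.dist z m + G.dist m v := hc.dist_triangle
  have h4 : G.dist z m = 1 := SimpleGraph.dist_eq_one_iff_adj.mpr hm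
  rw [h2] at h3
  omega

lemma vshape (ht : G.IsTree) {x y : V} (p : G.Walk x y) (hp : p.length = G.dist x y) (z : V) :
    ∃ a, a ≤ p.length ∧ G.dist z x = G.dist z (p.getVert a) + a ∧
      G.dist z y = G.dist z (p.getVert a) + (p.length - a) := by
  classical
  have hc := ht.isConnected
  have hstep : ∀ i, i + 1 ≤ p.length →
      G.dist z (p.getVert (i+1)) = G.dist z (p.getVert i) + 1 ∨
      G.dist z (p.getVert i) = G.dist z (p.getVert (i+1)) + 1 := by
    intro i hi
    exact adj_dist_step ht (p.adj_getVert_succ (by omega)) z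
  have hnolocmax : ∀ i, i + 2 ≤ p.length →
      G.dist z (p.getVert (i+1)) = G.dist z (p.getVert i) + 1 →
      G.dist z (p.getVert (i+2)) = G.dist z (p.getVert (i+1)) + 1 := by
    intro i hi hup
    have e1 : (i + 1) + 1 = i + 2 := by omega
    rcases hstep (i+1) (by omega) with hh | hh
    · rw [e1] at hh; exact hh
    · exfalso
      rw [e1] at hh
      have hadj1 : G.Adj (p.getVert (i+1)) (p.getVert i) := (p.adj_getVert_succ (by omega)).symm
      have hadj2 : G.Adj (p.getVert (i+1)) (p.getVert (i+2)) := by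
        have := p.adj_getVert_succ (i := i+1) (by omega)
        rwa [e1] at this
      have heq := adj_toward_unique ht (z := z) hadj1 hadj2 (by omega) (by omega)
      have hdist := dist_getVert_getVert hc p hp (i := i) (j := i+2) (by omega) (by omega)
      rw [heq, SimpleGraph.dist_self] at hdist
      omega
  set P : ℕ → Prop := fun i =>
    i ≤ p.length ∧ G.dist z x = G.dist z (p.getVert i) + i with hPdef
  have hP0 : P 0 := ⟨Nat.zero_le _, by simp⟩
  have hPdec : DecidablePred P := fun i => by rw [hPdef]; infer_instance
  set a := @Nat.findGreatest P hPdec p.length with ha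
  have hPa : P a := Nat.findGreatest_spec (Nat.zero_le _) hP0
  obtain ⟨haL, haeq⟩ := hPa
  have hbase : a + 1 ≤ p.length →
      G.dist z (p.getVert (a+1)) = G.dist z (p.getVert a) + 1 := by
    intro hle
    rcases hstep a hle with hgood | hbad
    · exact hgood
    · exfalso
      have hng : ¬ P (a+1) := Nat.findGreatest_is_greatest (by omega) hle
      exact hng ⟨hle, by omega⟩
  have hasc : ∀ j, a + j ≤ p.length →
      G.dist z (p.getVert (a + j)) = G.dist z (p.getVert a) + j := by
    intro j
    induction j using Nat.strong_induction_on with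
    | _ j ihj =>
      match j with
      | 0 => intro _; simp
      | 1 => intro hle; simpa using hbase hle
      | (m+2) =>
        intro hle
        have h1 := ihj (m+1) (by omega) (by omega)
        have h0 := ihj m (by omega) (by omega)
        have hn := hnolocmax (a + m) (by omega) (by
          have e2 : a + m + 1 = a + (m+1) := by omega
          rw [e2]; omega)
        have e3 : a + m + 2 = a + (m + 2) := by omega
        have e2 : a + m + 1 = a + (m+1) := by omega
        rw [e3, e2] at hn
        omega
  refine ⟨a, haL, haeq ▸ by rfl, ?_⟩
  have h2 := hasc (p.length - a) (by omega)
  have e4 : a + (p.length - a) = p.length := by omega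
  rw [e4, Walk.getVert_length] at h2
  exact h2

end Tree

section Delete

lemma induce_adj {s : Set V} {a b : ↥s} : (G.induce s).Adj a b ↔ G.Adj a.1 b.1 := Iff.rfl

def inducedHom (G : SimpleGraph V) (s : Set V) : G.induce s →g G :=
  ⟨Subtype.val, fun {a b} h => h⟩

lemma lift_walk {s : Set V} : ∀ {u v : V} (p : G.Walk u v) (hs : ∀ w ∈ p.support, w ∈ s),
    ∃ q : (G.induce s).Walk ⟨u, hs u p.start_mem_support⟩ ⟨v, hs v p.end_mem_support⟩,
      q.length = p.length := by
  intro u v p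
  induction p with
  | nil => intro hs; exact ⟨Walk.nil, rfl⟩
  | @cons u w v h q ih =>
    intro hs
    obtain ⟨q', hq'⟩ := ih (fun x hx => hs x (by simp [hx]))
    exact ⟨Walk.cons (induce_adj.mpr h) q', by simp [hq']⟩

lemma path_avoid [DecidableEq V] (ht : G.IsTree) {z : V}
    (hleaf : ∀ w₁ w₂, G.Adj z w₁ → G.Adj z w₂ → w₁ = w₂) {u v : V}
    (hu : u ≠ z) (hv : v ≠ z) (p : G.Walk u v) (hp : p.IsPath) : z ∉ p.support := by
  intro hz
  set q₁ := p.takeUntil z hz with hq₁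
  set q₂ := p.dropUntil z hz with hq₂
  have hl₁ : q₁.length ≠ 0 := fun h0 => hu (Walk.eq_of_length_eq_zero h0)
  have hl₂ : q₂.length ≠ 0 := fun h0 => hv (Walk.eq_of_length_eq_zero h0).symm
  have hn₁ : ¬ q₁.reverse.Nil := by rw [Walk.nil_iff_length_eq, Walk.length_reverse]; exact hl₁
  have hn₂ : ¬ q₂.Nil := by rw [Walk.nil_iff_length_eq]; exact hl₂
  have ha₁ : G.Adj z (q₁.reverse.getVert 1) := q₁.reverse.adj_snd hn₁
  have ha₂ : G.Adj z (q₂.getVert 1) := q₂.adj_snd hn₂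
  have heq := hleaf _ _ ha₁ ha₂
  have hm₁ : q₁.reverse.getVert 1 ∈ q₁.support := by
    have hmem : q₁.reverse.getVert 1 ∈ q₁.reverse.support := by
      rw [Walk.mem_support_iff_exists_getVert]
      exact ⟨1, rfl, by rw [Walk.length_reverse]; omega⟩
    rwa [Walk.support_reverse, List.mem_reverse] at hmem
  have hm₂ : q₂.getVert 1 ∈ q₂.support.tail := by
    have hmem : q₂.getVert 1 ∈ q₂.support := by
      rw [Walk.mem_support_iff_exists_getVert]; exact ⟨1, rfl, by omega⟩
    have hne : q₂.getVert 1 ≠ z := ha₂.ne'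
    rw [Walk.support_eq_cons] at hmem
    rcases List.mem_cons.mp hmem with h | h
    · exact absurd h hne
    · exact h
  have hnd : (q₁.support ++ q₂.support.tail).Nodup := by
    have hnodup := hp.support_nodup
    rw [← Walk.take_spec p hz, Walk.support_append] at hnodup
    exact hnodup
  exact (List.disjoint_of_nodup_append hnd) hm₁ (heq ▸ hm₂)

lemma dist_induce [DecidableEq V] (ht : G.IsTree) {z : V}
    (hleaf : ∀ w₁ w₂, G.Adj z w₁ → G.Adj z w₂ → w₁ = w₂) {u v : V}
    (hu : u ≠ z) (hv : v ≠ z) :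
    (G.induce {x : V | x ≠ z}).dist ⟨u, hu⟩ ⟨v, hv⟩ = G.dist u v := by
  obtain ⟨p, hp, hpl⟩ := exists_shortest_path ht.isConnected u v
  have hzp : z ∉ p.support := path_avoid ht hleaf hu hv p hp
  have hs : ∀ w ∈ p.support, w ∈ {x : V | x ≠ z} := by
    intro w hw
    simp only [Set.mem_setOf_eq]
    rintro rfl; exact hzp hw
  obtain ⟨q, hql⟩ := lift_walk p hs
  have hle : (G.induce {x : V | x ≠ z}).dist ⟨u, hu⟩ ⟨v, hv⟩ ≤ G.dist u v := by
    have := SimpleGraph.dist_le q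
    omega
  have hreach : (G.induce {x : V | x ≠ z}).Reachable ⟨u, hu⟩ ⟨v, hv⟩ := ⟨q⟩
  obtain ⟨r, hr⟩ := hreach.exists_walk_length_eq_dist
  have hge : G.dist u v ≤ (G.induce {x : V | x ≠ z}).dist ⟨u, hu⟩ ⟨v, hv⟩ := by
    have := SimpleGraph.dist_le (r.map (inducedHom G {x : V | x ≠ z}))
    rwa [Walk.length_map, hr] at this
  omega

lemma isTree_induce [DecidableEq V] (ht : G.IsTree) {z : V}
    (hleaf : ∀ w₁ w₂, G.Adj z w₁ → G.Adj z w₂ → w₁ = w₂)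
    (hex : ∃ w : V, w ≠ z) :
    (G.induce {x : V | x ≠ z}).IsTree := by
  rw [SimpleGraph.isTree_iff_existsUnique_path]
  obtain ⟨w, hw⟩ := hex
  refine ⟨⟨⟨w, hw⟩⟩, fun a b => ?_⟩
  obtain ⟨p, hp, hpl⟩ := exists_shortest_path ht.isConnected a.1 b.1
  have hzp : z ∉ p.support := path_avoid ht hleaf a.2 b.2 p hp
  have hs : ∀ x ∈ p.support, x ∈ {x : V | x ≠ z} := by
    intro x hx
    simp only [Set.mem_setOf_eq]
    rintro rfl; exact hzp hx
  obtain ⟨q, hql⟩ := lift_walk p hs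
  have hq : (q.copy (Subtype.ext rfl) (Subtype.ext rfl)).bypass.IsPath := Walk.bypass_isPath _
  refine ⟨_, hq, ?_⟩
  intro r hr
  have hinj : Function.Injective (inducedHom G {x : V | x ≠ z}) := Subtype.val_injective
  apply Walk.map_injective_of_injective hinj
  have h1 : (r.map (inducedHom G {x : V | x ≠ z})).IsPath :=
    Walk.map_isPath_of_injective hinj hr
  have h2 : (((q.copy (Subtype.ext rfl) (Subtype.ext rfl)).bypass).map
      (inducedHom G {x : V | x ≠ z})).IsPath :=
    Walk.map_isPath_of_injective hinj hq
  exact (ht.existsUnique_path a.1 b.1).unique h1 h2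

end Delete

section Count

variable [Fintype V] [DecidableEq V]

/-- ordered pair count at distance `i` -/
noncomputable def oc (G : SimpleGraph V) (i : ℕ) : ℕ :=
  ((univ : Finset (V × V)).filter fun p => p.1 ≠ p.2 ∧ G.dist p.1 p.2 = i).card

/-- number of vertices at distance `i` from `z` -/
noncomputable def rz (G : SimpleGraph V) (z : V) (i : ℕ) : ℕ :=
  ((univ : Finset V).filter fun v => G.dist z v = i).card

lemma rz_pos (G : SimpleGraph V) (hc : G.Connected) {z b : V} {m : ℕ} (hm : m ≤ G.dist z b) :
    1 ≤ rz G z m := by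
  obtain ⟨w, hw, -⟩ := exists_dist_eq hc hm
  exact Finset.card_pos.mpr ⟨w, by simp [hw]⟩

lemma rz_le_of_excluded (G : SimpleGraph V) (hc : G.Connected) {z w : V}
    (p : G.Walk z w) (hp : p.length = G.dist z w)
    {m : ℕ} (J : Finset ℕ) (hJ : ∀ j ∈ J, j ≤ p.length ∧ j ≠ m) :
    rz G z m + J.card ≤ Fintype.card V := by
  classical
  rw [rz]
  set A := (univ : Finset V).filter (fun v => G.dist z v = m) with hA
  set B := J.image p.getVert with hB
  have hgv : ∀ j ∈ J, G.dist z (p.getVert j) = j := by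
    intro j hj
    exact (shortest_getVert hc p hp j (hJ j hj).1).1
  have hBcard : B.card = J.card := by
    rw [hB]
    apply Finset.card_image_of_injOn
    intro j hj j' hj' heq
    have h1 := hgv j hj
    have h2 := hgv j' hj'
    rw [heq] at h1
    omega
  have hdisj : Disjoint A B := by
    rw [Finset.disjoint_left]
    intro v hv hvB
    rw [hA, mem_filter] at hv
    rw [hB, Finset.mem_image] at hvB
    obtain ⟨j, hj, rfl⟩ := hvB
    have := hgv j hj
    have := (hJ j hj).2
    omega
  have := Finset.card_union_of_disjoint hdisj
  have hle : (A ∪ B).card ≤ Fintype.card V := by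
    rw [← Finset.card_univ]
    exact Finset.card_le_card (Finset.subset_univ _)
  omega

lemma rz_le_one_of_unique_nbr (G : SimpleGraph V) {z : V}
    (hleaf : ∀ w₁ w₂, G.Adj z w₁ → G.Adj z w₂ → w₁ = w₂) :
    rz G z 1 ≤ 1 := by
  apply Finset.card_le_one.mpr
  intro v hv v' hv'
  rw [mem_filter] at hv hv'
  exact hleaf v v' (SimpleGraph.dist_eq_one_iff_adj.mp hv.2)
    (SimpleGraph.dist_eq_one_iff_adj.mp hv'.2)

lemma lt_diam_of_dist (G : SimpleGraph V) (hc : G.Connected) {u v : V} {k : ℕ}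
    (h : k + 1 ≤ G.dist u v) : k < G.diam := by
  haveI : Nonempty V := hc.nonempty
  have hne : G.ediam ≠ ⊤ := by
    obtain ⟨a, b, hab⟩ := SimpleGraph.exists_edist_eq_ediam_of_finite (G := G)
    rw [← hab]
    exact SimpleGraph.edist_ne_top_iff_reachable.mpr (hc.preconnected a b)
  have := SimpleGraph.dist_le_diam hne (u := u) (v := v)
  omega

lemma oc_eq_two_mul (G : SimpleGraph V) (i : ℕ) :
    oc G i = 2 * distCount G i := by
  classical
  rw [oc, distCount]
  have hmap : ∀ p ∈ (univ : Finset (V × V)).filter (fun p => p.1 ≠ p.2 ∧ G.dist p.1 p.2 = i),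
      s(p.1, p.2) ∈ ((univ : Finset V).sym2.filter (fun p => ¬ p.IsDiag)).filter
        (fun p => Sym2.lift ⟨fun u v => G.dist u v, fun u v => SimpleGraph.dist_comm⟩ p = i) := by
    rintro ⟨x, y⟩ hp
    obtain ⟨-, h1, h2⟩ := Finset.mem_filter.mp hp
    refine Finset.mem_filter.mpr ⟨Finset.mem_filter.mpr ⟨?_, ?_⟩, ?_⟩
    · rw [Finset.mk_mem_sym2_iff]; simp
    · simpa using h1
    · simpa using h2
  rw [Finset.card_eq_sum_card_fiberwise (f := fun p => s(p.1, p.2)) (by intro p hp; exact hmap p hp)]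
  have hfib : ∀ y ∈ ((univ : Finset V).sym2.filter (fun p => ¬ p.IsDiag)).filter
      (fun p => Sym2.lift ⟨fun u v => G.dist u v, fun u v => SimpleGraph.dist_comm⟩ p = i),
      (((univ : Finset (V × V)).filter (fun p => p.1 ≠ p.2 ∧ G.dist p.1 p.2 = i)).filter
        (fun p => s(p.1, p.2) = y)).card = 2 := by
    intro y hy
    induction y using Sym2.ind with
    | _ a b =>
      obtain ⟨hmem', hdist⟩ := Finset.mem_filter.mp hy
      obtain ⟨hmem, hdiag⟩ := Finset.mem_filter.mp hmem'
      have hab : a ≠ b := by simpa using hdiag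
      have hd : G.dist a b = i := by simpa using hdist
      have hset : ((univ : Finset (V × V)).filter
          (fun p => p.1 ≠ p.2 ∧ G.dist p.1 p.2 = i)).filter (fun p => s(p.1, p.2) = s(a, b))
          = {(a, b), (b, a)} := by
        ext ⟨x, y⟩
        simp only [mem_filter, mem_univ, true_and, Finset.mem_insert, Finset.mem_singleton,
          Prod.mk.injEq]
        constructor
        · rintro ⟨⟨hne, hdi⟩, hmk⟩
          have := Sym2.eq_iff.mp hmk
          tauto
        · rintro (⟨rfl, rfl⟩ | ⟨rfl, rfl⟩)
          · exact ⟨⟨hab, hd⟩, rfl⟩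
          · exact ⟨⟨hab.symm, SimpleGraph.dist_comm.trans hd⟩, Sym2.eq_swap⟩
      rw [hset, Finset.card_insert_of_notMem (by simp [Prod.ext_iff, hab]),
        Finset.card_singleton]
  rw [Finset.sum_congr rfl hfib, Finset.sum_const, smul_eq_mul, mul_comm]

lemma oc_split (G : SimpleGraph V) (ht : G.IsTree) {z : V}
    (hleaf : ∀ w₁ w₂, G.Adj z w₁ → G.Adj z w₂ → w₁ = w₂) {i : ℕ} (hi : 1 ≤ i) :
    oc G i = oc (G.induce {x : V | x ≠ z}) i + 2 * rz G z i := by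
  classical
  set S := (univ : Finset (V × V)).filter (fun p => p.1 ≠ p.2 ∧ G.dist p.1 p.2 = i) with hS
  have split1 := Finset.card_filter_add_card_filter_not
    (s := S) (p := fun p => p.1 = z)
  set S2 := S.filter (fun p => ¬ p.1 = z) with hS2
  have split2 := Finset.card_filter_add_card_filter_not
    (s := S2) (p := fun p => p.2 = z)
  have hzdist : ∀ v : V, G.dist z v = i → v ≠ z := by
    intro v hv hvz
    rw [hvz, SimpleGraph.dist_self] at hv
    omega
  have cA : (S.filter (fun p => p.1 = z)).card = rz G z i := by
    rw [rz]
    refine Finset.card_bij' (fun p _ => p.2) (fun v _ => (z, v)) ?_ ?_ ?_ ?_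
    · intro p hp
      obtain ⟨hp1, hp2⟩ := Finset.mem_filter.mp hp
      obtain ⟨-, hne, hd⟩ := Finset.mem_filter.mp hp1
      rw [hp2] at hd
      exact Finset.mem_filter.mpr ⟨Finset.mem_univ _, hd⟩
    · intro v hv
      obtain ⟨-, hd⟩ := Finset.mem_filter.mp hv
      refine Finset.mem_filter.mpr ⟨Finset.mem_filter.mpr
        ⟨Finset.mem_univ _, (hzdist v hd).symm, hd⟩, rfl⟩
    · intro p hp
      obtain ⟨hp1, hp2⟩ := Finset.mem_filter.mp hp
      exact Prod.ext hp2.symm rfl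
    · intro v hv
      rfl
  have cB : (S2.filter (fun p => p.2 = z)).card = rz G z i := by
    rw [rz]
    refine Finset.card_bij' (fun p _ => p.1) (fun v _ => (v, z)) ?_ ?_ ?_ ?_
    · intro p hp
      obtain ⟨hp1, hp2⟩ := Finset.mem_filter.mp hp
      obtain ⟨hp3, hp4⟩ := Finset.mem_filter.mp hp1
      obtain ⟨-, hne, hd⟩ := Finset.mem_filter.mp hp3
      rw [hp2] at hd
      rw [SimpleGraph.dist_comm] at hd
      exact Finset.mem_filter.mpr ⟨Finset.mem_univ _, hd⟩
    · intro v hv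
      obtain ⟨-, hd⟩ := Finset.mem_filter.mp hv
      refine Finset.mem_filter.mpr ⟨Finset.mem_filter.mpr ⟨Finset.mem_filter.mpr
        ⟨Finset.mem_univ _, hzdist v hd, by rw [SimpleGraph.dist_comm]; exact hd⟩,
        hzdist v hd⟩, rfl⟩
    · intro p hp
      obtain ⟨hp1, hp2⟩ := Finset.mem_filter.mp hp
      exact Prod.ext rfl hp2.symm
    · intro v hv
      rfl
  have cC : (S2.filter (fun p => ¬ p.2 = z)).card = oc (G.induce {x : V | x ≠ z}) i := by
    rw [oc]
    refine Finset.card_bij'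
      (fun p hp => ((⟨p.1, ((Finset.mem_filter.mp (Finset.mem_filter.mp hp).1).2 :
          ¬ p.1 = z)⟩ : {x : V | x ≠ z}),
        (⟨p.2, ((Finset.mem_filter.mp hp).2 : ¬ p.2 = z)⟩ : {x : V | x ≠ z})))
      (fun q _ => (q.1.1, q.2.1)) ?_ ?_ ?_ ?_
    · intro p hp
      obtain ⟨hp1, hp2⟩ := Finset.mem_filter.mp hp
      obtain ⟨hp3, hp4⟩ := Finset.mem_filter.mp hp1
      obtain ⟨-, hne, hd⟩ := Finset.mem_filter.mp hp3
      refine Finset.mem_filter.mpr ⟨Finset.mem_univ _, ?_, ?_⟩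
      · intro hqe
        exact hne (congrArg Subtype.val hqe)
      · rw [dist_induce ht hleaf hp4 hp2]
        exact hd
    · intro q hq
      obtain ⟨-, hne, hd⟩ := Finset.mem_filter.mp hq
      rw [dist_induce ht hleaf q.1.2 q.2.2] at hd
      refine Finset.mem_filter.mpr ⟨Finset.mem_filter.mpr ⟨Finset.mem_filter.mpr
        ⟨Finset.mem_univ _, ?_, hd⟩, q.1.2⟩, q.2.2⟩
      intro hee
      exact hne (Subtype.ext hee)
    · intro p hp
      rfl
    · intro q hq
      rfl
  have : oc G i = S.card := rfl
  omega

end Count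

section CaseC

lemma caseC_inner (ht : G.IsTree) {z b x y : V} (p : G.Walk x y)
    (hp : p.length = G.dist x y)
    (hL : p.length + 1 = G.dist z b)
    {a a' : ℕ} (haL : a ≤ p.length) (ha'L : a' ≤ p.length) (haa : a ≤ a')
    (hzx : G.dist z x = G.dist z (p.getVert a) + a)
    (hzy : G.dist z y = G.dist z (p.getVert a) + (p.length - a))
    (hbx : G.dist b x = G.dist b (p.getVert a') + a')
    (h2 : G.dist z y ≤ p.length)
    (h3 : G.dist b x ≤ p.length) : False := by
  have hc := ht.isConnected
  have tri1 : G.dist z b ≤ G.dist z (p.getVert a) + G.dist (p.getVert a) b :=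
    hc.dist_triangle
  have tri2 : G.dist (p.getVert a) b ≤
      G.dist (p.getVert a) (p.getVert a') + G.dist (p.getVert a') b := hc.dist_triangle
  have hqq : G.dist (p.getVert a) (p.getVert a') = a' - a :=
    dist_getVert_getVert hc p hp haa ha'L
  have hcomm : G.dist (p.getVert a') b = G.dist b (p.getVert a') := SimpleGraph.dist_comm
  omega

lemma caseC_hit (ht : G.IsTree) {z b : V}
    (hdiam : ∀ w w' : V, G.dist w w' ≤ G.dist z b)
    (huniq : ∀ x' y' : V, G.dist x' y' = G.dist z b →
      (x' = z ∧ y' = b) ∨ (x' = b ∧ y' = z))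
    {x y : V} (hxy : G.dist x y + 1 = G.dist z b) :
    x = z ∨ x = b ∨ y = z ∨ y = b := by
  by_contra hcon
  push_neg at hcon
  obtain ⟨hxz, hxb, hyz, hyb⟩ := hcon
  have hc := ht.isConnected
  have hzb : z ≠ b := by
    intro h
    rw [h, SimpleGraph.dist_self] at hxy
    omega
  have key : ∀ w, w ≠ b → G.dist z w ≤ G.dist x y := by
    intro w hw
    rcases Nat.lt_or_ge (G.dist z w) (G.dist z b) with hlt | hge
    · omega
    · exfalso
      have heq : G.dist z w = G.dist z b := le_antisymm (hdiam z w) hge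
      rcases huniq z w heq with ⟨-, h⟩ | ⟨h, -⟩
      · exact hw h
      · exact hzb h
  have key' : ∀ w, w ≠ z → G.dist b w ≤ G.dist x y := by
    intro w hw
    rcases Nat.lt_or_ge (G.dist b w) (G.dist z b) with hlt | hge
    · omega
    · exfalso
      have hle : G.dist b w ≤ G.dist z b := hdiam b w
      have heq : G.dist b w = G.dist z b := le_antisymm hle hge
      rcases huniq b w heq with ⟨h, -⟩ | ⟨-, h⟩
      · exact hzb h.symm
      · exact hw h
  obtain ⟨p, hpp, hpl⟩ := exists_shortest_path hc x y
  obtain ⟨a, haL, hzx, hzy⟩ := vshape ht p hpl z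
  obtain ⟨a', ha'L, hbx, hby⟩ := vshape ht p hpl b
  rcases le_total a a' with h | h
  · exact caseC_inner ht p hpl (by omega) haL ha'L h hzx hzy hbx
      (by have := key y hyb; omega) (by have := key' x hxz; omega)
  · refine caseC_inner (z := b) (b := z) ht p hpl ?_ ha'L haL h hbx hby hzx
      (by have := key' y hyz; omega) (by have := key x hxb; omega)
    rw [SimpleGraph.dist_comm (u := b)]
    omega

variable [Fintype V] [DecidableEq V]

lemma oc_le_of_hit (G : SimpleGraph V) {z b : V} {m : ℕ}
    (hhit : ∀ x y : V, x ≠ y → G.dist x y = m → x = z ∨ x = b ∨ y = z ∨ y = b) :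
    oc G m ≤ 2 * rz G z m + 2 * rz G b m := by
  classical
  rw [oc, rz, rz]
  have hsub : ((univ : Finset (V × V)).filter fun p => p.1 ≠ p.2 ∧ G.dist p.1 p.2 = m) ⊆
      (((univ : Finset V).filter fun v => G.dist z v = m).image (fun v => (z, v))) ∪
      (((univ : Finset V).filter fun v => G.dist z v = m).image (fun v => (v, z))) ∪
      (((univ : Finset V).filter fun v => G.dist b v = m).image (fun v => (b, v))) ∪
      (((univ : Finset V).filter fun v => G.dist b v = m).image (fun v => (v, b))) := by
    rintro ⟨x, y⟩ hp
    obtain ⟨-, hne, hd⟩ := Finset.mem_filter.mp hp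
    simp only [Finset.mem_union, Finset.mem_image, Finset.mem_filter, Finset.mem_univ,
      true_and, Prod.mk.injEq]
    rcases hhit x y hne hd with rfl | rfl | rfl | rfl
    · exact Or.inl (Or.inl (Or.inl ⟨y, hd, rfl, rfl⟩))
    · exact Or.inl (Or.inr ⟨y, hd, rfl, rfl⟩)
    · exact Or.inl (Or.inl (Or.inr ⟨x, by rwa [SimpleGraph.dist_comm], rfl, rfl⟩))
    · exact Or.inr ⟨x, by rwa [SimpleGraph.dist_comm], rfl, rfl⟩
  have h1 := Finset.card_le_card hsub
  have h2 := Finset.card_union_le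
    ((((univ : Finset V).filter fun v => G.dist z v = m).image (fun v => (z, v))) ∪
      (((univ : Finset V).filter fun v => G.dist z v = m).image (fun v => (v, z))) ∪
      (((univ : Finset V).filter fun v => G.dist b v = m).image (fun v => (b, v))))
    ((((univ : Finset V).filter fun v => G.dist b v = m).image (fun v => (v, b))))
  have h3 := Finset.card_union_le
    ((((univ : Finset V).filter fun v => G.dist z v = m).image (fun v => (z, v))) ∪
      (((univ : Finset V).filter fun v => G.dist z v = m).image (fun v => (v, z))))
    ((((univ : Finset V).filter fun v => G.dist b v = m).image (fun v => (b, v))))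
  have h4 := Finset.card_union_le
    ((((univ : Finset V).filter fun v => G.dist z v = m).image (fun v => (z, v))))
    ((((univ : Finset V).filter fun v => G.dist z v = m).image (fun v => (v, z))))
  have i1 := Finset.card_image_le
    (s := ((univ : Finset V).filter fun v => G.dist z v = m)) (f := fun v => (z, v))
  have i2 := Finset.card_image_le
    (s := ((univ : Finset V).filter fun v => G.dist z v = m)) (f := fun v => (v, z))
  have i3 := Finset.card_image_le
    (s := ((univ : Finset V).filter fun v => G.dist b v = m)) (f := fun v => (b, v))
  have i4 := Finset.card_image_le
    (s := ((univ : Finset V).filter fun v => G.dist b v = m)) (f := fun v => (v, b))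
  omega

lemma oc_ge_two (G : SimpleGraph V) {z b : V} (hzb : z ≠ b) {m : ℕ}
    (hd : G.dist z b = m) : 2 ≤ oc G m := by
  classical
  rw [oc]
  have hsub : ({(z, b), (b, z)} : Finset (V × V)) ⊆
      ((univ : Finset (V × V)).filter fun p => p.1 ≠ p.2 ∧ G.dist p.1 p.2 = m) := by
    intro p hp
    rcases Finset.mem_insert.mp hp with rfl | hp
    · exact Finset.mem_filter.mpr ⟨Finset.mem_univ _, hzb, hd⟩
    · rw [Finset.mem_singleton] at hp
      subst hp
      exact Finset.mem_filter.mpr ⟨Finset.mem_univ _, hzb.symm,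
        by rwa [SimpleGraph.dist_comm]⟩
  have hc : ({(z, b), (b, z)} : Finset (V × V)).card = 2 := by
    rw [Finset.card_insert_of_notMem (by simp [Prod.ext_iff, hzb]), Finset.card_singleton]
  have := Finset.card_le_card hsub
  omega

lemma rz_two_le_one (ht : G.IsTree)
    {z b : V}
    (hdiam : ∀ w w' : V, G.dist w w' ≤ G.dist z b)
    (huniq : ∀ x y : V, G.dist x y = G.dist z b →
      (x = z ∧ y = b) ∨ (x = b ∧ y = z))
    (hD : G.dist z b = 3) : rz G z 2 ≤ 1 := by
  classical
  have hc := ht.isConnected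
  have hzb : z ≠ b := by
    intro h; rw [h, SimpleGraph.dist_self] at hD; omega
  have hfar : ∀ w, G.dist b w ≤ G.dist b z := by
    intro w
    have := hdiam b w
    rw [SimpleGraph.dist_comm (u := b) (v := z)]
    omega
  have hleaf : ∀ w₁ w₂, G.Adj z w₁ → G.Adj z w₂ → w₁ = w₂ := fun w₁ w₂ h₁ h₂ =>
    farthest_nbr_unique ht hfar h₁ h₂
  obtain ⟨p, hpl⟩ := hc.exists_walk_length_eq_dist z b
  have hadj : G.Adj z (p.getVert 1) := p.adj_snd (by rw [Walk.nil_iff_length_eq]; omega)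
  obtain ⟨hd1, hd2⟩ := shortest_getVert hc p hpl 1 (by omega)
  have key : ∀ u, G.dist z u = 2 → G.Adj u b := by
    intro u hu
    have hunq : ∀ w, G.Adj z w → w = p.getVert 1 := fun w hw => hleaf w _ hw hadj
    have hune : u ≠ z := by
      intro he; rw [he, SimpleGraph.dist_self] at hu; omega
    have hld := leaf_dist ht hadj hunq hune
    have hadj2 : G.Adj (p.getVert 1) u := SimpleGraph.dist_eq_one_iff_adj.mp (by omega)
    have hbp : G.dist b (p.getVert 1) = 2 := by
      rw [SimpleGraph.dist_comm]; omega
    rcases adj_dist_step ht hadj2 b with hs | hs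
    · exfalso
      have hdd : G.dist b u = G.dist z b := by omega
      rcases huniq b u hdd with ⟨h1, -⟩ | ⟨-, h2⟩
      · exact hzb h1.symm
      · rw [h2, SimpleGraph.dist_self] at hu; omega
    · have hone : G.dist b u = 1 := by omega
      exact (SimpleGraph.dist_eq_one_iff_adj.mp hone).symm
  rw [rz]
  apply Finset.card_le_one.mpr
  intro v hv v' hv'
  obtain ⟨-, hdv⟩ := Finset.mem_filter.mp hv
  obtain ⟨-, hdv'⟩ := Finset.mem_filter.mp hv'
  exact adj_toward_unique ht (z := z) (key v hdv).symm (key v' hdv').symm (by omega) (by omega)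

end CaseC

section Main

universe u

def Mconst (n : ℕ) : ℕ := max 2 (2 * (n - 4))

lemma dist_le_diam' {V : Type u} [Fintype V] (G : SimpleGraph V) (hc : G.Connected)
    (u v : V) : G.dist u v ≤ G.diam := by
  haveI : Nonempty V := hc.nonempty
  have hne : G.ediam ≠ ⊤ := by
    obtain ⟨a, b, hab⟩ := SimpleGraph.exists_edist_eq_ediam_of_finite (G := G)
    rw [← hab]
    exact SimpleGraph.edist_ne_top_iff_reachable.mpr (hc.preconnected a b)
  exact SimpleGraph.dist_le_diam hne

theorem main_aux : ∀ (n : ℕ) {V : Type u} [Fintype V] [DecidableEq V] (T : SimpleGraph V),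
    T.IsTree → Fintype.card V = n → ∀ k : ℕ, 1 ≤ k → k < T.diam →
    oc T k ≤ Mconst n * oc T (k + 1) := by
  intro n
  induction n using Nat.strong_induction_on with
  | _ n IH =>
  intro V _ _ T ht hcard k hk hkD
  classical
  have hc := ht.isConnected
  haveI : Nonempty V := hc.nonempty
  have hnpos : 1 ≤ n := by
    have : 0 < Fintype.card V := Fintype.card_pos
    omega
  obtain ⟨z0, b0, hzb0⟩ := SimpleGraph.exists_dist_eq_diam (G := T)
  have hdle : ∀ u v : V, T.dist u v ≤ T.dist z0 b0 := by
    intro u v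
    rw [hzb0]
    exact dist_le_diam' T hc u v
  have hM2 : 2 ≤ Mconst n := le_max_left _ _
  have hM4 : 2 * (n - 4) ≤ Mconst n := le_max_right _ _
  have hzb_ne : z0 ≠ b0 := by
    intro h
    rw [h, SimpleGraph.dist_self] at hzb0
    omega
  have hfarb : ∀ w, T.dist b0 w ≤ T.dist b0 z0 := by
    intro w
    have h1 := hdle b0 w
    have h2 : T.dist b0 z0 = T.dist z0 b0 := SimpleGraph.dist_comm
    omega
  have hfarz : ∀ w, T.dist z0 w ≤ T.dist z0 b0 := fun w => hdle z0 w
  -- generic deletion step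
  have delstep : ∀ (z bp : V), (∀ w, T.dist bp w ≤ T.dist bp z) →
      k + 1 ≤ T.dist z bp →
      (∃ u v : V, u ≠ z ∧ v ≠ z ∧ k + 1 ≤ T.dist u v) →
      oc T k ≤ Mconst n * oc T (k + 1) := by
    intro z bp hfar hke surv
    have hleaf : ∀ w₁ w₂, T.Adj z w₁ → T.Adj z w₂ → w₁ = w₂ :=
      fun w₁ w₂ h₁ h₂ => farthest_nbr_unique ht hfar h₁ h₂
    have hbz : bp ≠ z := by
      intro h
      rw [h, SimpleGraph.dist_self] at hke
      omega
    set T' := T.induce {x : V | x ≠ z} with hT'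
    have ht' : T'.IsTree := isTree_induce ht hleaf ⟨bp, hbz⟩
    have hcard' : Fintype.card {x : V | x ≠ z} = n - 1 := by
      rw [← hcard]
      simp [Fintype.card_subtype_compl]
      rw [Finset.filter_not, Finset.card_sdiff_of_subset (Finset.subset_univ _), Finset.filter_eq', if_pos (Finset.mem_univ _), Finset.card_singleton, Finset.card_univ]
    obtain ⟨u', v', hu', hv', hd'⟩ := surv
    have hdist' : T'.dist ⟨u', hu'⟩ ⟨v', hv'⟩ = T.dist u' v' := dist_induce ht hleaf hu' hv'
    have hkd' : k < T'.diam :=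
      lt_diam_of_dist T' ht'.isConnected (u := ⟨u', hu'⟩) (v := ⟨v', hv'⟩) (by omega)
    have ihT' := IH (n-1) (by omega) T' ht' hcard' k hk hkd'
    have hsplit1 := oc_split T ht hleaf (i := k) (by omega)
    have hsplit2 := oc_split T ht hleaf (i := k+1) (by omega)
    rw [← hT'] at hsplit1 hsplit2
    have hs1 : 1 ≤ rz T z (k+1) := rz_pos T hc (b := bp) (by omega)
    have hrz : rz T z k ≤ Mconst n := by
      by_cases hk1 : k = 1
      · have := rz_le_one_of_unique_nbr T hleaf
        rw [hk1]
        omega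
      · obtain ⟨p, hpl⟩ := hc.exists_walk_length_eq_dist z bp
        have hcount := rz_le_of_excluded T hc p hpl (m := k)
          (J := (Finset.range (k+2)).erase k) (by
            intro j hj
            simp only [Finset.mem_erase, Finset.mem_range] at hj
            constructor
            · omega
            · exact hj.1)
        have hJcard : ((Finset.range (k+2)).erase k).card = k + 1 := by
          rw [Finset.card_erase_of_mem (by simp), Finset.card_range]
          omega
        omega
    have hMm : Mconst (n-1) ≤ Mconst n := max_le_max (le_refl 2) (by omega)
    have m1 : Mconst (n-1) * oc T' (k+1) ≤ Mconst n * oc T' (k+1) :=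
      Nat.mul_le_mul_right _ hMm
    have m2 : 2 * Mconst n ≤ 2 * Mconst n * rz T z (k+1) :=
      Nat.le_mul_of_pos_right _ (by omega)
    rw [hsplit2]
    have expand : Mconst n * (oc T' (k+1) + 2 * rz T z (k+1)) =
        Mconst n * oc T' (k+1) + 2 * Mconst n * rz T z (k+1) := by ring
    omega
  by_cases hA : k + 2 ≤ T.diam
  · -- there is room beyond the pair: delete z0
    have hke : k + 1 ≤ T.dist z0 b0 := by omega
    obtain ⟨p, hpl⟩ := hc.exists_walk_length_eq_dist z0 b0
    obtain ⟨hgd1, hgd2⟩ := shortest_getVert hc p hpl 1 (by omega)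
    refine delstep z0 b0 hfarb hke ⟨p.getVert 1, b0, ?_, ?_, ?_⟩
    · intro h
      rw [h, SimpleGraph.dist_self] at hgd1
      omega
    · exact fun h => hzb_ne h.symm
    · omega
  · have hDk : T.diam = k + 1 := by omega
    by_cases hU : ∀ x y : V, T.dist x y = T.dist z0 b0 →
        (x = z0 ∧ y = b0) ∨ (x = b0 ∧ y = z0)
    · -- unique diametral pair
      have hhit : ∀ x y : V, x ≠ y → T.dist x y = k →
          x = z0 ∨ x = b0 ∨ y = z0 ∨ y = b0 := by
        intro x y hne hd
        exact caseC_hit ht hdle hU (by omega)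
      have hoc := oc_le_of_hit T (z := z0) (b := b0) hhit
      have hoc2 : 2 ≤ oc T (k+1) := oc_ge_two T hzb_ne (by omega)
      have hbound : rz T z0 k + rz T b0 k ≤ Mconst n := by
        have hU' : ∀ x y : V, T.dist x y = T.dist b0 z0 →
            (x = b0 ∧ y = z0) ∨ (x = z0 ∧ y = b0) := by
          intro x y hxy
          have : T.dist x y = T.dist z0 b0 := by
            rw [hxy]; exact SimpleGraph.dist_comm
          rcases hU x y this with h | h
          · exact Or.inr h
          · exact Or.inl h
        have hdle' : ∀ w w' : V, T.dist w w' ≤ T.dist b0 z0 := by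
          intro w w'
          have := hdle w w'
          have h2 : T.dist b0 z0 = T.dist z0 b0 := SimpleGraph.dist_comm
          omega
        by_cases hk1 : k = 1
        · -- diameter 2 : both are leaves
          have l1 := rz_le_one_of_unique_nbr T
            (fun w₁ w₂ h₁ h₂ => farthest_nbr_unique ht hfarb h₁ h₂)
          have l2 := rz_le_one_of_unique_nbr T (z := b0)
            (fun w₁ w₂ h₁ h₂ => farthest_nbr_unique ht hfarz h₁ h₂)
          rw [hk1]
          omega
        · by_cases hk2 : k = 2
          · have l1 := rz_two_le_one ht hdle hU (by omega)
            have l2 := rz_two_le_one (z := b0) (b := z0) ht hdle' hU' (by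
              have h2 : T.dist b0 z0 = T.dist z0 b0 := SimpleGraph.dist_comm
              omega)
            rw [hk2]
            omega
          · -- k ≥ 3, diameter ≥ 4
            obtain ⟨p, hpl⟩ := hc.exists_walk_length_eq_dist z0 b0
            obtain ⟨q, hql⟩ := hc.exists_walk_length_eq_dist b0 z0
            have c1 := rz_le_of_excluded T hc p hpl (m := k)
              (J := (Finset.range (k+2)).erase k) (by
                intro j hj
                simp only [Finset.mem_erase, Finset.mem_range] at hj
                exact ⟨by omega, hj.1⟩)
            have c2 := rz_le_of_excluded T hc q hql (m := k)
              (J := (Finset.range (k+2)).erase k) (by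
                intro j hj
                simp only [Finset.mem_erase, Finset.mem_range] at hj
                have h2 : T.dist b0 z0 = T.dist z0 b0 := SimpleGraph.dist_comm
                exact ⟨by omega, hj.1⟩)
            have hJcard : ((Finset.range (k+2)).erase k).card = k + 1 := by
              rw [Finset.card_erase_of_mem (by simp), Finset.card_range]
              omega
            omega
      have hmul : Mconst n * 2 ≤ Mconst n * oc T (k+1) :=
        Nat.mul_le_mul_left _ hoc2
      omega
    · push_neg at hU
      obtain ⟨x, y, hdxy, hne⟩ := hU
      have hxy_ne : x ≠ y := by
        intro h
        rw [h, SimpleGraph.dist_self] at hdxy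
        omega
      have hchoice : (x ≠ z0 ∧ y ≠ z0) ∨ (x ≠ b0 ∧ y ≠ b0) := by
        by_cases hxz : x = z0
        · refine Or.inr ⟨by rw [hxz]; exact hzb_ne, fun hyb => hne.1 hxz hyb⟩
        · by_cases hyz : y = z0
          · refine Or.inr ⟨fun hxb => hne.2 hxb hyz, by rw [hyz]; exact hzb_ne⟩
          · exact Or.inl ⟨hxz, hyz⟩
      rcases hchoice with ⟨h1, h2⟩ | ⟨h1, h2⟩
      · exact delstep z0 b0 hfarb (by omega) ⟨x, y, h1, h2, by omega⟩
      · refine delstep b0 z0 (by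
          intro w
          have := hfarz w
          omega) (by
          have h2 : T.dist b0 z0 = T.dist z0 b0 := SimpleGraph.dist_comm
          omega) ⟨x, y, h1, h2, by omega⟩

end Main

end StmtAux


/-- For a tree of order `n ≥ 5` with diameter `D`, and `1 ≤ k < D`,
`d_k(T) ≤ 2(n - 4) d_{k+1}(T)`. -/
theorem stmt_4 {V : Type*} [Fintype V] [DecidableEq V] (T : SimpleGraph V) (n D : ℕ)
    (htree : T.IsTree) (hcard : Fintype.card V = n) (hn : 5 ≤ n)
    (hD : T.diam = D) (k : ℕ) (hk1 : 1 ≤ k) (hkD : k < D) :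
    distCount T k ≤ 2 * (n - 4) * distCount T (k + 1) := by
  classical
  have h2 := StmtAux.main_aux n T htree hcard k hk1 (by omega)
  rw [StmtAux.oc_eq_two_mul, StmtAux.oc_eq_two_mul] at h2
  have hM : StmtAux.Mconst n = 2 * (n - 4) := max_eq_right (by omega)
  rw [hM] at h2
  have h3 : 2 * (n - 4) * (2 * distCount T (k+1)) =
      2 * (2 * (n - 4) * distCount T (k+1)) := by ring
  rw [h3] at h2
  exact Nat.le_of_mul_le_mul_left h2 (by norm_num)
end

section
/- For every integer n ≥ 6, the real polynomial p_n(x) = (n−1) + (C(n−3,2) + 2)x + 2(n−4)x² + x³ has a real root in the open interval (−(1 + 1/√2)n + 7, −(1 + 1/√2)n + 8). Here C(m,2) = m(m−1)/2. -/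
set_option linter.unusedVariables false

/-- For `n ≥ 6`, the polynomial `p_n(x) = (n-1) + (C(n-3,2)+2)x + 2(n-4)x² + x³`
has a real root in the interval `(-(1 + 1/√2)n + 7, -(1 + 1/√2)n + 8)`. -/
theorem stmt_6 (n : ℕ) (hn : 6 ≤ n) :
    ∃ x : ℝ,
      (-(1 + 1 / Real.sqrt 2) * (n : ℝ) + 7 < x ∧ x < -(1 + 1 / Real.sqrt 2) * (n : ℝ) + 8) ∧
      ((n : ℝ) - 1) + (((n : ℝ) - 3) * ((n : ℝ) - 4) / 2 + 2) * x
        + 2 * ((n : ℝ) - 4) * x ^ 2 + x ^ 3 = 0 := by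
  have hs0 : (0:ℝ) < Real.sqrt 2 := Real.sqrt_pos.mpr (by norm_num)
  have hs2 : Real.sqrt 2 ^ 2 = 2 := Real.sq_sqrt (by norm_num)
  have hsu : Real.sqrt 2 < 1.415 := by
    rw [show (1.415:ℝ) = Real.sqrt (1.415^2) from (Real.sqrt_sq (by norm_num)).symm]
    exact Real.sqrt_lt_sqrt (by norm_num) (by norm_num)
  have hsl : (1.414:ℝ) < Real.sqrt 2 := by
    rw [show (1.414:ℝ) = Real.sqrt (1.414^2) from (Real.sqrt_sq (by norm_num)).symm]
    exact Real.sqrt_lt_sqrt (by norm_num) (by norm_num)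
  have hinv : 1 / Real.sqrt 2 = Real.sqrt 2 / 2 := by
    rw [div_eq_div_iff hs0.ne' (by norm_num : (2:ℝ) ≠ 0)]
    nlinarith [hs2]
  set s := Real.sqrt 2 with hs
  have hN : (6:ℝ) ≤ (n:ℝ) := by exact_mod_cast hn
  set N := (n:ℝ) with hNdef
  set f : ℝ → ℝ := fun x => (N - 1) + ((N - 3) * (N - 4) / 2 + 2) * x
      + 2 * (N - 4) * x ^ 2 + x ^ 3 with hf
  set a := -(1 + 1 / s) * N + 7 with ha
  set b := -(1 + 1 / s) * N + 8 with hb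
  have hab : a ≤ b := by rw [ha, hb]; linarith
  have hfa : f a < 0 := by
    have h1 : f a = 6 + (63/2 - 43/2 * s) * N + (-(3/2) + 3/4 * s) * N^2 := by
      rw [hf, ha, hinv]
      show (N - 1) + ((N - 3) * (N - 4) / 2 + 2) * (-(1 + s/2) * N + 7)
          + 2 * (N - 4) * (-(1 + s/2) * N + 7) ^ 2 + (-(1 + s/2) * N + 7) ^ 3 = _
      linear_combination (-(N^3*s)/8 - N^3/4 + 13/4*N^2) * hs2
    rw [h1]
    nlinarith [hN, hsl, hsu, sq_nonneg (N - 6),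
      mul_nonneg (by linarith : (0:ℝ) ≤ N - 6) (by linarith : (0:ℝ) ≤ N - 6)]
  have hfb : 0 < f b := by
    have h1 : f b = 63 + (29 - 36 * s) * N + (-(1/2) + 7/4 * s) * N^2 := by
      rw [hf, hb, hinv]
      show (N - 1) + ((N - 3) * (N - 4) / 2 + 2) * (-(1 + s/2) * N + 8)
          + 2 * (N - 4) * (-(1 + s/2) * N + 8) ^ 2 + (-(1 + s/2) * N + 8) ^ 3 = _
      linear_combination (-(N^3*s)/8 - N^3/4 + 4*N^2) * hs2
    rw [h1]
    nlinarith [hN, hsl, hsu, sq_nonneg (N - 6),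
      mul_nonneg (by linarith : (0:ℝ) ≤ N - 6) (by linarith : (0:ℝ) ≤ N - 6)]
  have hcont : ContinuousOn f (Set.Icc a b) := by
    apply Continuous.continuousOn
    rw [hf]; continuity
  have hsub := intermediate_value_Ioo hab hcont
  have h0 : (0:ℝ) ∈ Set.Ioo (f a) (f b) := ⟨hfa, hfb⟩
  obtain ⟨x, hx, hfx⟩ := hsub h0
  exact ⟨x, ⟨hx.1, hx.2⟩, hfx⟩
end

section
/- Let G be a connected simple graph of order n ≥ 3 with diameter D ≥ 2. Then for every integer k with 1 ≤ k < D, (n − k − 1)·d_k(G) ≥ 2·d_{k+1}(G). -/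
set_option linter.unusedVariables false

namespace Stmt7Aux

open SimpleGraph Finset

variable {V : Type*} [Fintype V] [DecidableEq V]

/-- The incidence relation used in the double counting. -/
def Rel (G : SimpleGraph V) (k : ℕ) (P Q : Sym2 V) : Prop :=
  ∃ a b c : V, P = s(a, b) ∧ Q = s(a, c) ∧ G.Adj b c ∧
    G.dist a b = k ∧ G.dist a c = k + 1

/-- If `dist u v = k+1` then `u` has a neighbor at distance `k` from `v`. -/
lemma exists_adj_dist (G : SimpleGraph V) (hconn : G.Connected) {u v : V} {k : ℕ}
    (h : G.dist u v = k + 1) : ∃ x, G.Adj u x ∧ G.dist x v = k := by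
  obtain ⟨p, hp, hlen⟩ := hconn.exists_path_of_dist u v
  rw [h] at hlen
  have hnil : ¬ p.Nil := by
    rw [SimpleGraph.Walk.not_nil_iff_lt_length]
    omega
  refine ⟨p.getVert 1, p.adj_snd hnil, ?_⟩
  have h1 : p.tail.length + 1 = p.length := SimpleGraph.Walk.length_tail_add_one hnil
  have hle : G.dist (p.getVert 1) v ≤ k := by
    have : G.dist (p.getVert 1) v ≤ p.tail.length := SimpleGraph.dist_le p.tail
    omega
  have hge : k + 1 ≤ 1 + G.dist (p.getVert 1) v := by
    have ht := hconn.dist_triangle (u := u) (v := p.getVert 1) (w := v)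
    have h2 : G.dist u (p.getVert 1) = 1 :=
      SimpleGraph.dist_eq_one_iff_adj.mpr (p.adj_snd hnil)
    omega
  omega

/-- On a shortest `a`–`b` walk, every support vertex is within distance `k` of
both endpoints. -/
lemma support_dist_le (G : SimpleGraph V) {a b w : V} {k : ℕ} (p : G.Walk a b)
    (hlen : p.length = k) (hw : w ∈ p.support) :
    G.dist a w ≤ k ∧ G.dist w b ≤ k := by
  obtain ⟨q, r, rfl⟩ := SimpleGraph.Walk.mem_support_iff_exists_append.mp hw
  rw [SimpleGraph.Walk.length_append] at hlen
  have h1 := SimpleGraph.dist_le q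
  have h2 := SimpleGraph.dist_le r
  omega

variable (G : SimpleGraph V) (k : ℕ)

/-- `d_i` pairs as a finset. -/
noncomputable def pairs (i : ℕ) : Finset (Sym2 V) :=
  (((Finset.univ : Finset V).sym2.filter (fun p => ¬ p.IsDiag)).filter
    (fun p => Sym2.lift ⟨fun u v => G.dist u v, fun u v => SimpleGraph.dist_comm⟩ p = i))

lemma mem_pairs {i : ℕ} {u v : V} :
    s(u, v) ∈ pairs G i ↔ u ≠ v ∧ G.dist u v = i := by
  simp [pairs, Finset.mem_sym2_iff]

open scoped Classical in
lemma lower (hconn : G.Connected) (hk : 1 ≤ k) {Q : Sym2 V}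
    (hQ : Q ∈ pairs G (k + 1)) :
    2 ≤ ((pairs G k).filter (fun P => Rel G k P Q)).card := by
  induction Q using Sym2.inductionOn with
  | hf u v =>
  rw [mem_pairs] at hQ
  obtain ⟨huv, hd⟩ := hQ
  obtain ⟨x, hux, hxv⟩ := exists_adj_dist G hconn hd
  have hd' : G.dist v u = k + 1 := by rwa [SimpleGraph.dist_comm]
  obtain ⟨y, hvy, hyu⟩ := exists_adj_dist G hconn hd'
  have huy : G.dist u y = k := by rwa [SimpleGraph.dist_comm]
  -- the two distance-k pairs
  have hP1 : s(u, y) ∈ (pairs G k).filter (fun P => Rel G k P s(u, v)) := by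
    rw [Finset.mem_filter, mem_pairs]
    refine ⟨⟨?_, huy⟩, u, y, v, rfl, rfl, hvy.symm, huy, hd⟩
    rintro rfl
    rw [SimpleGraph.dist_self] at huy
    omega
  have hP2 : s(x, v) ∈ (pairs G k).filter (fun P => Rel G k P s(u, v)) := by
    rw [Finset.mem_filter, mem_pairs]
    refine ⟨⟨?_, hxv⟩, v, x, u, Sym2.eq_swap, Sym2.eq_swap, hux.symm, ?_, ?_⟩
    · rintro rfl
      rw [SimpleGraph.dist_self] at hxv
      omega
    · rwa [SimpleGraph.dist_comm]
    · rwa [SimpleGraph.dist_comm]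
  have hne : s(u, y) ≠ s(x, v) := by
    intro h
    rw [Sym2.eq_iff] at h
    rcases h with ⟨rfl, rfl⟩ | ⟨rfl, rfl⟩
    · exact G.ne_of_adj hux rfl
    · exact huv rfl
  have := Finset.one_lt_card.mpr ⟨_, hP1, _, hP2, hne⟩
  omega

open scoped Classical in
lemma upper (hconn : G.Connected) (hk : 1 ≤ k) {P : Sym2 V}
    (hP : P ∈ pairs G k) :
    ((pairs G (k + 1)).filter (Rel G k P)).card ≤ Fintype.card V - k - 1 := by
  induction P using Sym2.inductionOn with
  | hf a b =>
  rw [mem_pairs] at hP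
  obtain ⟨hab, hd⟩ := hP
  obtain ⟨p, hpath, hlen⟩ := hconn.exists_path_of_dist a b
  rw [hd] at hlen
  classical
  set S : Finset V := p.support.toFinset with hS
  have hScard : S.card = k + 1 := by
    rw [hS, List.card_toFinset, hpath.support_nodup.dedup,
      SimpleGraph.Walk.length_support, hlen]
  -- the injection
  set f : Sym2 V → V := fun Q =>
    if h : ∃ c, c ∈ Q ∧ c ∉ p.support then h.choose else a with hf
  -- key: for Q in the filter with witnesses (a', b', c'), f Q = c'
  have key : ∀ Q ∈ (pairs G (k + 1)).filter (Rel G k s(a, b)),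
      ∀ a' b' c' : V, s(a, b) = s(a', b') → Q = s(a', c') → G.Adj b' c' →
      G.dist a' b' = k → G.dist a' c' = k + 1 → f Q = c' ∧ c' ∉ p.support := by
    intro Q hQ a' b' c' hPab hQac hadj hdb hdc
    have ha'mem : a' ∈ p.support := by
      rcases Sym2.eq_iff.mp hPab with ⟨rfl, rfl⟩ | ⟨rfl, rfl⟩
      · exact p.start_mem_support
      · exact p.end_mem_support
    have hc'not : c' ∉ p.support := by
      intro hmem
      have hle := support_dist_le G p hlen hmem
      rcases Sym2.eq_iff.mp hPab with ⟨rfl, rfl⟩ | ⟨rfl, rfl⟩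
      · omega
      · rw [SimpleGraph.dist_comm] at hdc
        omega
    have hex : ∃ c, c ∈ Q ∧ c ∉ p.support := ⟨c', by rw [hQac]; simp, hc'not⟩
    have hspec := hex.choose_spec
    have : f Q = hex.choose := by rw [hf]; exact dif_pos hex
    rw [this]
    have hmemQ : hex.choose ∈ s(a', c') := by rw [← hQac]; exact hspec.1
    rw [Sym2.mem_iff] at hmemQ
    rcases hmemQ with rfl | rfl
    · exact absurd ha'mem hspec.2
    · exact ⟨rfl, hc'not⟩
  have hcard2 : ((pairs G (k + 1)).filter (Rel G k s(a, b))).card ≤ (Finset.univ \ S).card := by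
    apply Finset.card_le_card_of_injOn f
    · intro Q hQ
      have hrel := (Finset.mem_filter.mp hQ).2
      obtain ⟨a', b', c', hPab, hQac, hadj, hdb, hdc⟩ := hrel
      obtain ⟨hfQ, hc'⟩ := key Q hQ a' b' c' hPab hQac hadj hdb hdc
      rw [Finset.mem_coe, Finset.mem_sdiff]
      exact ⟨Finset.mem_univ _, by rw [hfQ]; simpa [hS] using hc'⟩
    · intro Q1 hQ1 Q2 hQ2 hfeq
      have hrel1 := (Finset.mem_filter.mp hQ1).2
      have hrel2 := (Finset.mem_filter.mp hQ2).2
      obtain ⟨a1, b1, c1, hP1, hQa1, hadj1, hdb1, hdc1⟩ := hrel1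
      obtain ⟨a2, b2, c2, hP2, hQa2, hadj2, hdb2, hdc2⟩ := hrel2
      obtain ⟨hf1, _⟩ := key Q1 hQ1 a1 b1 c1 hP1 hQa1 hadj1 hdb1 hdc1
      obtain ⟨hf2, _⟩ := key Q2 hQ2 a2 b2 c2 hP2 hQa2 hadj2 hdb2 hdc2
      have hc : c1 = c2 := by rw [← hf1, ← hf2, hfeq]
      subst hc
      by_cases ha : a1 = a2
      · rw [hQa1, hQa2, ha]
      · exfalso
        have h12 : s(a1, b1) = s(a2, b2) := by rw [← hP1, ← hP2]
        rcases Sym2.eq_iff.mp h12 with ⟨h1, h2⟩ | ⟨h1, h2⟩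
        · exact ha h1
        · subst h1; subst h2
          have := SimpleGraph.dist_eq_one_iff_adj.mpr hadj1
          omega
  have hsub : S ⊆ Finset.univ := Finset.subset_univ S
  rw [Finset.card_sdiff_of_subset hsub, Finset.card_univ, hScard] at hcard2
  omega

end Stmt7Aux

open scoped Classical in
/-- For a connected graph of order `n ≥ 3` with diameter `D ≥ 2`, and `1 ≤ k < D`,
`(n - k - 1) d_k(G) ≥ 2 d_{k+1}(G)`. -/
theorem stmt_7 {V : Type*} [Fintype V] [DecidableEq V] (G : SimpleGraph V) (n D : ℕ)
    (hconn : G.Connected) (hcard : Fintype.card V = n) (hn : 3 ≤ n)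
    (hD : G.diam = D) (hD2 : 2 ≤ D) (k : ℕ) (hk1 : 1 ≤ k) (hkD : k < D) :
    (n - k - 1) * distCount G k ≥ 2 * distCount G (k + 1) := by
  subst hcard
  have hck : distCount G k = (Stmt7Aux.pairs G k).card := by
    simp [distCount, Stmt7Aux.pairs]
  have hck1 : distCount G (k + 1) = (Stmt7Aux.pairs G (k + 1)).card := by
    simp [distCount, Stmt7Aux.pairs]
  rw [hck, hck1]
  open Stmt7Aux in
  calc 2 * (pairs G (k+1)).card
      = ∑ Q ∈ pairs G (k+1), 2 := by rw [Finset.sum_const, smul_eq_mul, mul_comm]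
    _ ≤ ∑ Q ∈ pairs G (k+1), ((pairs G k).filter (fun P => Rel G k P Q)).card :=
        Finset.sum_le_sum fun Q hQ => lower G k hconn hk1 hQ
    _ = ∑ Q ∈ pairs G (k+1), ∑ P ∈ pairs G k, if Rel G k P Q then 1 else 0 :=
        Finset.sum_congr rfl fun Q _ => Finset.card_filter _ _
    _ = ∑ P ∈ pairs G k, ∑ Q ∈ pairs G (k+1), if Rel G k P Q then 1 else 0 :=
        Finset.sum_comm
    _ = ∑ P ∈ pairs G k, ((pairs G (k+1)).filter (Rel G k P)).card :=
        Finset.sum_congr rfl fun P _ => (Finset.card_filter _ _).symm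
    _ ≤ ∑ P ∈ pairs G k, (Fintype.card V - k - 1) :=
        Finset.sum_le_sum fun P hP => upper G k hconn hk1 hP
    _ = (Fintype.card V - k - 1) * (pairs G k).card := by
        rw [Finset.sum_const, smul_eq_mul, mul_comm]
end

section
/- Let G be a connected simple graph of order n ≥ 3. Then every nonzero complex root z of the Wiener polynomial W(G;x) satisfies |z| ≥ 2/(n − 2). -/
set_option linter.unusedVariables false

set_option maxHeartbeats 1000000

lemma my_dist_lt_card {V : Type*} [Fintype V] (G : SimpleGraph V)
    (hconn : G.Connected) (u v : V) : G.dist u v < Fintype.card V := by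
  classical
  obtain ⟨p, hp⟩ := hconn.exists_walk_length_eq_dist u v
  calc G.dist u v ≤ p.bypass.length := SimpleGraph.dist_le _
    _ < Fintype.card V := p.bypass_isPath.length_lt

lemma my_exists_pred {V : Type*} (G : SimpleGraph V) (hconn : G.Connected)
    (v0 v : V) (hne : v ≠ v0) :
    ∃ u, G.Adj u v ∧ G.dist v0 u + 1 = G.dist v0 v := by
  obtain ⟨p, hp⟩ := hconn.exists_walk_length_eq_dist v0 v
  obtain ⟨w, h, q, hq⟩ := SimpleGraph.Walk.exists_eq_cons_of_ne hne p.reverse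
  refine ⟨w, h.symm, ?_⟩
  have h1 : G.dist v0 w ≤ q.reverse.length := SimpleGraph.dist_le _
  have h2 : q.reverse.length = p.length - 1 := by
    have := congrArg SimpleGraph.Walk.length hq
    simp only [SimpleGraph.Walk.length_reverse, SimpleGraph.Walk.length_cons] at this ⊢
    omega
  have h3 : G.dist v0 v ≤ G.dist v0 w + G.dist w v := hconn.dist_triangle
  have h4 : G.dist w v = 1 := SimpleGraph.dist_eq_one_iff_adj.mpr h.symm
  have h5 : 0 < G.dist v0 v := hconn.pos_dist_of_ne (Ne.symm hne)
  omega

lemma my_edge_lb {V : Type*} [Fintype V] [DecidableEq V] (G : SimpleGraph V)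
    (hconn : G.Connected) :
    Fintype.card V - 1 ≤ (((Finset.univ : Finset V).sym2.filter (fun p => ¬ p.IsDiag)).filter
      (fun p => Sym2.lift ⟨fun u v => G.dist u v, fun u v => SimpleGraph.dist_comm⟩ p = 1)).card := by
  classical
  have : Nonempty V := hconn.nonempty
  obtain ⟨v0⟩ := this
  have hex : ∀ v : V, v ≠ v0 → ∃ u, G.Adj u v ∧ G.dist v0 u + 1 = G.dist v0 v :=
    fun v hv => my_exists_pred G hconn v0 v hv
  choose u hadj hdist using hex
  set f : V → Sym2 V := fun v => if hv : v ≠ v0 then s(u v hv, v) else s(v0, v0) with hf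
  have hmaps : ∀ v ∈ Finset.univ.erase v0,
      f v ∈ (((Finset.univ : Finset V).sym2.filter (fun p => ¬ p.IsDiag)).filter
      (fun p => Sym2.lift ⟨fun u v => G.dist u v, fun u v => SimpleGraph.dist_comm⟩ p = 1)) := by
    intro v hv
    have hv' : v ≠ v0 := Finset.ne_of_mem_erase hv
    rw [hf]
    simp only [dif_pos hv', Finset.mem_filter, Finset.sym2_univ, Finset.mem_univ,
      Sym2.mk_isDiag_iff, Sym2.lift_mk]
    exact ⟨⟨trivial, (hadj v hv').ne⟩, SimpleGraph.dist_eq_one_iff_adj.mpr (hadj v hv')⟩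
  have hinj : Set.InjOn f (Finset.univ.erase v0) := by
    intro x hx y hy hxy
    have hx' : x ≠ v0 := Finset.ne_of_mem_erase (Finset.mem_coe.mp hx)
    have hy' : y ≠ v0 := Finset.ne_of_mem_erase (Finset.mem_coe.mp hy)
    rw [hf] at hxy
    simp only [dif_pos hx', dif_pos hy', Sym2.eq_iff] at hxy
    rcases hxy with ⟨-, h⟩ | ⟨h1, h2⟩
    · exact h
    · exfalso
      have d1 := hdist x hx'
      have d2 := hdist y hy'
      rw [h1] at d1
      rw [← h2] at d2
      omega
  have := Finset.card_le_card_of_injOn f hmaps hinj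
  simpa [Finset.card_erase_of_mem] using this

/-- Every nonzero complex Wiener root `z` of a connected graph of order `n ≥ 3`
satisfies `|z| ≥ 2/(n - 2)`. -/
theorem stmt_8 {V : Type*} [Fintype V] [DecidableEq V] (G : SimpleGraph V) (n : ℕ)
    (hconn : G.Connected) (hcard : Fintype.card V = n) (hn : 3 ≤ n)
    (z : ℂ) (hz : z ≠ 0) (hroot : wienerPoly G z = 0) :
    ‖z‖ ≥ 2 / ((n : ℝ) - 2) := by
  classical
  unfold wienerPoly at hroot
  set dl : Sym2 V → ℕ :=
    Sym2.lift ⟨fun u v => G.dist u v, fun u v => SimpleGraph.dist_comm⟩ with hdl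
  set S : Finset (Sym2 V) := (Finset.univ : Finset V).sym2.filter (fun p => ¬ p.IsDiag) with hS
  have hn2 : (0:ℝ) < (n:ℝ) - 2 := by
    have : (3:ℝ) ≤ n := by exact_mod_cast hn
    linarith
  have hzpos : 0 < ‖z‖ := norm_pos_iff.mpr hz
  by_cases hcase : ‖z‖ ≤ 1 ∨ n = 3
  · -- main argument
    have hd1 : ∀ p ∈ S, 1 ≤ dl p := by
      intro p hp
      induction p using Sym2.ind with
      | _ a b =>
        rw [hS] at hp
        simp only [Finset.mem_filter, Sym2.mk_isDiag_iff] at hp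
        have hab : a ≠ b := hp.2
        simpa [hdl, Nat.one_le_iff_ne_zero, Nat.pos_iff_ne_zero] using hconn.pos_dist_of_ne hab
    have hdlt : ∀ p ∈ S, dl p < n := by
      intro p hp
      induction p using Sym2.ind with
      | _ a b =>
        have := my_dist_lt_card G hconn a b
        rw [hcard] at this
        simpa [hdl] using this
    set S1 := S.filter (fun p => dl p = 1) with hS1
    set T := S.filter (fun p => ¬ dl p = 1) with hT
    have hsplit : ∑ p ∈ S1, z ^ dl p + ∑ p ∈ T, z ^ dl p = ∑ p ∈ S, z ^ dl p :=
      Finset.sum_filter_add_sum_filter_not S _ _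
    have hS1sum : ∑ p ∈ S1, z ^ dl p = (S1.card : ℂ) * z := by
      rw [Finset.sum_congr rfl (fun p hp => by
        rw [(Finset.mem_filter.mp hp).2, pow_one])]
      simp [Finset.sum_const, nsmul_eq_mul]
    have hroot' : (S1.card : ℂ) * z = - ∑ p ∈ T, z ^ dl p := by
      rw [← hS1sum]
      have h0 : ∑ p ∈ S1, z ^ dl p + ∑ p ∈ T, z ^ dl p = 0 := by rw [hsplit]; exact hroot
      exact eq_neg_of_add_eq_zero_left h0
    have hterm : ∀ p ∈ T, ‖z‖ ^ dl p ≤ ‖z‖ ^ 2 := by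
      intro p hp
      have hpS : p ∈ S := (Finset.mem_filter.mp hp).1
      have hne1 : ¬ dl p = 1 := (Finset.mem_filter.mp hp).2
      have h2 : 2 ≤ dl p := by have := hd1 p hpS; omega
      rcases hcase with hle | h3
      · exact pow_le_pow_of_le_one (norm_nonneg z) hle h2
      · have hlt := hdlt p hpS
        have : dl p = 2 := by omega
        rw [this]
    have key : (S1.card : ℝ) * ‖z‖ ≤ (T.card : ℝ) * ‖z‖ ^ 2 := by
      calc (S1.card : ℝ) * ‖z‖ = ‖(S1.card : ℂ) * z‖ := by
            rw [norm_mul]; simp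
        _ = ‖∑ p ∈ T, z ^ dl p‖ := by rw [hroot', norm_neg]
        _ ≤ ∑ p ∈ T, ‖z ^ dl p‖ := norm_sum_le _ _
        _ = ∑ p ∈ T, ‖z‖ ^ dl p := by
            refine Finset.sum_congr rfl fun p _ => ?_
            rw [norm_pow]
        _ ≤ ∑ p ∈ T, ‖z‖ ^ 2 := Finset.sum_le_sum hterm
        _ = (T.card : ℝ) * ‖z‖ ^ 2 := by
            rw [Finset.sum_const, nsmul_eq_mul]
    have hcardS : S.card = n.choose 2 := by
      rw [hS, Finset.sym2_univ, ← hcard, ← Sym2.card_subtype_not_diag]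
      exact (Fintype.card_subtype _).symm
    have hat : S1.card + T.card = n.choose 2 := by
      rw [← hcardS, hS1, hT]
      exact Finset.card_filter_add_card_filter_not _
    have hA : n - 1 ≤ S1.card := by
      have := my_edge_lb G hconn
      rw [hcard] at this
      exact this
    have hApos : 0 < S1.card := by omega
    have htpos : 0 < T.card := by
      rcases Nat.eq_zero_or_pos T.card with h0 | h; swap
      · exact h
      exfalso
      rw [h0] at key
      have : (0:ℝ) < (S1.card : ℝ) * ‖z‖ := by positivity
      simp at key
      nlinarith
    have hkey2 : (S1.card : ℝ) ≤ (T.card : ℝ) * ‖z‖ := by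
      have : (S1.card : ℝ) * ‖z‖ ≤ ((T.card : ℝ) * ‖z‖) * ‖z‖ := by
        nlinarith [key]
      exact le_of_mul_le_mul_right this hzpos
    have h2C : 2 * (S1.card + T.card) = n * (n - 1) := by
      rw [hat, Nat.choose_two_right, Nat.mul_div_cancel']
      obtain ⟨m, hm⟩ : ∃ m, n = m + 1 := ⟨n - 1, by omega⟩
      subst hm
      simpa [Nat.mul_comm] using (Nat.even_mul_succ_self m).two_dvd
    -- cast to ℝ
    have hA' : (n:ℝ) - 1 ≤ (S1.card : ℝ) := by
      have := (Nat.cast_le (α := ℝ)).mpr hA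
      rw [Nat.cast_sub (by omega)] at this
      simpa using this
    have h2C' : 2 * ((S1.card : ℝ) + (T.card : ℝ)) = (n:ℝ) * ((n:ℝ) - 1) := by
      have := congrArg (fun k : ℕ => (k : ℝ)) h2C
      push_cast [Nat.cast_sub (by omega : 1 ≤ n)] at this
      linarith
    have htpos' : (0:ℝ) < (T.card : ℝ) := by exact_mod_cast htpos
    have hq : (2:ℝ) * (T.card : ℝ) ≤ (S1.card : ℝ) * ((n:ℝ) - 2) := by
      have hn' : (0:ℝ) ≤ (n:ℝ) := by positivity
      nlinarith [mul_nonneg hn' (sub_nonneg.mpr hA')]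
    rw [ge_iff_le, div_le_iff₀ hn2]
    have : (2:ℝ) * (T.card : ℝ) ≤ ((T.card : ℝ) * ‖z‖) * ((n:ℝ) - 2) := by
      calc (2:ℝ) * (T.card : ℝ) ≤ (S1.card : ℝ) * ((n:ℝ) - 2) := hq
        _ ≤ ((T.card : ℝ) * ‖z‖) * ((n:ℝ) - 2) :=
            mul_le_mul_of_nonneg_right hkey2 (le_of_lt hn2)
    have h2 : (T.card : ℝ) * 2 ≤ (T.card : ℝ) * (‖z‖ * ((n:ℝ) - 2)) := by
      nlinarith [this]
    have := le_of_mul_le_mul_left h2 htpos'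
    linarith
  · push_neg at hcase
    obtain ⟨h1, h3⟩ := hcase
    have hn4 : 4 ≤ n := by omega
    have : (2:ℝ) / ((n:ℝ) - 2) ≤ 1 := by
      rw [div_le_one hn2]
      have : (4:ℝ) ≤ n := by exact_mod_cast hn4
      linarith
    linarith
end

section
/- For all positive integers a and b, there exists a connected simple graph G of diameter 2 such that −a/b is a (real) Wiener root of G. -/
set_option linter.unusedVariables false

/-- triangular numbers -/
def T2 (v : ℕ) : ℕ := v.choose 2

lemma T2_succ (v : ℕ) : T2 (v + 1) = T2 v + v := by
  unfold T2
  rw [Nat.choose_succ_succ]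
  simp [Nat.choose_one_right, Nat.add_comm]

lemma T2_mono : Monotone T2 := fun _ _ h => Nat.choose_mono 2 h

lemma two_mul_T2 (v : ℕ) : 2 * T2 v = v * (v - 1) := by
  induction v with
  | zero => simp [T2]
  | succ w ih =>
    rw [T2_succ, Nat.mul_add, ih]
    cases w with
    | zero => simp
    | succ u =>
      have h1 : (u + 1) * (u + 1 - 1) = (u+1) * u := by rfl
      have h2 : (u + 1 + 1) * (u + 1 + 1 - 1) = (u+1)*u + 2*(u+1) := by
        simp only [Nat.add_sub_cancel]; ring
      rw [h1, h2]

/-- the graph whose non-edges are the `k` pairs of smallest rank -/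
def rgraph (n k : ℕ) : SimpleGraph (Fin n) where
  Adj u v := u ≠ v ∧ k ≤ T2 (max u.val v.val) + min u.val v.val
  symm := by
    constructor
    intro u v h
    exact ⟨h.1.symm, by rw [max_comm, min_comm]; exact h.2⟩
  loopless := ⟨fun u h => h.1 rfl⟩

/-- rank of an unordered pair -/
def rnkS {n : ℕ} : Sym2 (Fin n) → ℕ :=
  Sym2.lift ⟨fun u v => T2 (max u.val v.val) + min u.val v.val,
    fun u v => by dsimp only; rw [max_comm, min_comm]⟩

lemma rank_inj {u v u' v' : ℕ} (h1 : u < v) (h2 : u' < v')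
    (h : T2 v + u = T2 v' + u') : v = v' ∧ u = u' := by
  rcases lt_trichotomy v v' with hlt | he | hgt
  · exfalso
    have := T2_mono (Nat.succ_le_of_lt hlt)
    rw [T2_succ] at this
    omega
  · subst he; exact ⟨rfl, by omega⟩
  · exfalso
    have := T2_mono (Nat.succ_le_of_lt hgt)
    rw [T2_succ] at this
    omega

lemma unrank {n j : ℕ} (h : j < T2 n) : ∃ u v, u < v ∧ v < n ∧ T2 v + u = j := by
  induction n with
  | zero => simp [T2, Nat.choose] at h
  | succ m ih =>
    by_cases hj : j < T2 m
    · obtain ⟨u, v, h1, h2, h3⟩ := ih hj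
      exact ⟨u, v, h1, Nat.lt_succ_of_lt h2, h3⟩
    · rw [T2_succ] at h
      exact ⟨j - T2 m, m, by omega, Nat.lt_succ_self m, by omega⟩

lemma rnkS_inj {n : ℕ} (p q : Sym2 (Fin n)) (hp : ¬ p.IsDiag) (hq : ¬ q.IsDiag)
    (h : rnkS p = rnkS q) : p = q := by
  induction p using Sym2.ind with | _ a b =>
  induction q using Sym2.ind with | _ c d =>
  rw [Sym2.mk_isDiag_iff] at hp hq
  simp only [rnkS, Sym2.lift_mk] at h
  have hab : a.val ≠ b.val := fun hv => hp (Fin.ext hv)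
  have hcd : c.val ≠ d.val := fun hv => hq (Fin.ext hv)
  have h1 : min a.val b.val < max a.val b.val := by omega
  have h2 : min c.val d.val < max c.val d.val := by omega
  have h3 : T2 (max a.val b.val) + min a.val b.val
      = T2 (max c.val d.val) + min c.val d.val := h
  obtain ⟨hmax, hmin⟩ := rank_inj h1 h2 h3
  have : (a.val = c.val ∧ b.val = d.val) ∨ (a.val = d.val ∧ b.val = c.val) := by omega
  rcases this with ⟨e1, e2⟩ | ⟨e1, e2⟩
  · rw [Sym2.eq_iff]; exact Or.inl ⟨Fin.ext e1, Fin.ext e2⟩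
  · rw [Sym2.eq_iff]; exact Or.inr ⟨Fin.ext e1, Fin.ext e2⟩

lemma rnkS_lt {n : ℕ} (p : Sym2 (Fin n)) (hp : ¬ p.IsDiag) : rnkS p < T2 n := by
  induction p using Sym2.ind with | _ a b =>
  rw [Sym2.mk_isDiag_iff] at hp
  simp only [rnkS, Sym2.lift_mk]
  have hab : a.val ≠ b.val := fun hv => hp (Fin.ext hv)
  have h1 : max a.val b.val < n := by
    have := a.isLt; have := b.isLt; omega
  calc T2 (max a.val b.val) + min a.val b.val
      < T2 (max a.val b.val) + max a.val b.val := by omega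
    _ = T2 (max a.val b.val + 1) := (T2_succ _).symm
    _ ≤ T2 n := T2_mono h1

lemma card_rank_lt (n K : ℕ) (hK : K ≤ T2 n) :
    (((Finset.univ : Finset (Fin n)).sym2.filter (fun p => ¬ p.IsDiag)).filter
      (fun p => rnkS p < K)).card = K := by
  conv_rhs => rw [← Finset.card_range K]
  apply Finset.card_bij (fun p _ => rnkS p)
  · intro p hp
    simp only [Finset.mem_filter] at hp
    exact Finset.mem_range.mpr hp.2
  · intro p hp q hq hpq
    simp only [Finset.mem_filter] at hp hq
    exact rnkS_inj p q hp.1.2 hq.1.2 hpq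
  · intro j hj
    obtain ⟨u, v, huv, hv, hr⟩ := unrank (lt_of_lt_of_le (Finset.mem_range.mp hj) hK)
    have hu : u < n := lt_trans huv hv
    refine ⟨s(⟨u, hu⟩, ⟨v, hv⟩), ?_, ?_⟩
    · simp only [Finset.mem_filter, Finset.mk_mem_sym2_iff, Finset.mem_univ, and_self,
        Sym2.mk_isDiag_iff, true_and]
      constructor
      · intro hdiag
        have : u = v := congrArg Fin.val hdiag
        omega
      · show rnkS s(⟨u, hu⟩, ⟨v, hv⟩) < K
        simp only [rnkS, Sym2.lift_mk]
        have hmax : max u v = v := max_eq_right (le_of_lt huv)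
        have hmin : min u v = u := min_eq_left (le_of_lt huv)
        simp only [hmax, hmin]
        rw [hr]
        exact Finset.mem_range.mp hj
    · show rnkS s(⟨u, hu⟩, ⟨v, hv⟩) = j
      simp only [rnkS, Sym2.lift_mk]
      have hmax : max u v = v := max_eq_right (le_of_lt huv)
      have hmin : min u v = u := min_eq_left (le_of_lt huv)
      simp only [hmax, hmin]
      exact hr

section dist
variable {n k : ℕ}

lemma adj_univ (hn : 2 ≤ n) (hk : k ≤ T2 (n-1)) (u : Fin n)
    (hu : u ≠ ⟨n-1, by omega⟩) : (rgraph n k).Adj u ⟨n-1, by omega⟩ := by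
  show _ ∧ _
  refine ⟨hu, ?_⟩
  have h1 : u.val < n := u.isLt
  have h2 : u.val ≠ n - 1 := fun h => hu (Fin.ext h)
  show k ≤ T2 (max u.val (n-1)) + min u.val (n-1)
  have hmax : max u.val (n-1) = n - 1 := by omega
  rw [hmax]
  omega

lemma rgraph_conn (hn : 2 ≤ n) (hk : k ≤ T2 (n-1)) : (rgraph n k).Connected := by
  rw [SimpleGraph.connected_iff_exists_forall_reachable]
  refine ⟨⟨n-1, by omega⟩, fun x => ?_⟩
  by_cases hx : x = ⟨n-1, by omega⟩
  · rw [hx]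
  · exact ((adj_univ hn hk x hx).reachable).symm

lemma edist_le_two (hn : 2 ≤ n) (hk : k ≤ T2 (n-1)) (u v : Fin n) :
    (rgraph n k).edist u v ≤ 2 := by
  by_cases huv : u = v
  · subst huv; simp [SimpleGraph.edist_self]
  by_cases hu : u = ⟨n-1, by omega⟩
  · subst hu
    have hadj := ((adj_univ hn hk v (fun hv => huv hv.symm)).symm)
    calc (rgraph n k).edist _ v ≤ 1 := le_of_eq (SimpleGraph.edist_eq_one_iff_adj.mpr hadj)
      _ ≤ 2 := by norm_num
  by_cases hv : v = ⟨n-1, by omega⟩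
  · subst hv
    have hadj := adj_univ hn hk u huv
    calc (rgraph n k).edist u _ ≤ 1 := le_of_eq (SimpleGraph.edist_eq_one_iff_adj.mpr hadj)
      _ ≤ 2 := by norm_num
  · have h1 := adj_univ hn hk u hu
    have h2 := (adj_univ hn hk v hv).symm
    have := SimpleGraph.edist_le
      (SimpleGraph.Walk.cons h1 (SimpleGraph.Walk.cons h2 SimpleGraph.Walk.nil))
    simpa using this

lemma edist_eq_two (hn : 2 ≤ n) (hk : k ≤ T2 (n-1)) (u v : Fin n) (huv : u ≠ v)
    (hna : ¬ (rgraph n k).Adj u v) : (rgraph n k).edist u v = 2 := by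
  have hle := edist_le_two hn hk u v
  have h0 : (rgraph n k).edist u v ≠ 0 :=
    fun h => huv (SimpleGraph.edist_eq_zero_iff.mp h)
  have h1 : (rgraph n k).edist u v ≠ 1 :=
    fun h => hna (SimpleGraph.edist_eq_one_iff_adj.mp h)
  have hne : (rgraph n k).edist u v ≠ ⊤ :=
    (lt_of_le_of_lt hle (by exact_mod_cast ENat.coe_lt_top 2 : (2:ℕ∞) < ⊤)).ne
  have hcoe : (((rgraph n k).edist u v).toNat : ℕ∞) = (rgraph n k).edist u v :=
    ENat.coe_toNat hne
  rw [← hcoe] at hle h0 h1 ⊢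
  norm_cast at hle h0 h1 ⊢
  omega

lemma dist_eq_two (hn : 2 ≤ n) (hk : k ≤ T2 (n-1)) (u v : Fin n) (huv : u ≠ v)
    (hna : ¬ (rgraph n k).Adj u v) : (rgraph n k).dist u v = 2 := by
  show ((rgraph n k).edist u v).toNat = 2
  rw [edist_eq_two hn hk u v huv hna]
  rfl

lemma rgraph_diam (hn : 2 ≤ n) (hk : k ≤ T2 (n-1)) (hk0 : 0 < k) (hn3 : 3 ≤ n) :
    (rgraph n k).diam = 2 := by
  have hediam_le : (rgraph n k).ediam ≤ 2 :=
    SimpleGraph.ediam_le_of_edist_le (edist_le_two hn hk)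
  set u : Fin n := ⟨0, by omega⟩
  set v : Fin n := ⟨1, by omega⟩
  have huv : u ≠ v := by
    intro h
    have : (0:ℕ) = 1 := congrArg Fin.val h
    omega
  have hna : ¬ (rgraph n k).Adj u v := by
    intro h
    rcases (show _ ∧ _ from h) with ⟨-, h2⟩
    have h2' : k ≤ T2 (max 0 1) + min 0 1 := h2
    have hT : T2 (max 0 1) = 0 := rfl
    rw [hT] at h2'
    omega
  have h2 : (rgraph n k).edist u v = 2 := edist_eq_two hn hk u v huv hna
  have hediam_ge : (2 : ℕ∞) ≤ (rgraph n k).ediam := h2 ▸ SimpleGraph.edist_le_ediam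
  have : (rgraph n k).ediam = 2 := le_antisymm hediam_le hediam_ge
  show ((rgraph n k).ediam).toNat = 2
  rw [this]; rfl

end dist

lemma final_arith (a b m : ℕ) (hb : 0 < b) :
    ((b * m : ℕ) : ℂ) * (-((a:ℂ)/(b:ℂ)))^2 + ((a * m : ℕ) : ℂ) * (-((a:ℂ)/(b:ℂ)))^1 = 0 := by
  have hb0 : (b:ℂ) ≠ 0 := Nat.cast_ne_zero.mpr (by omega)
  push_cast
  field_simp
  ring


/-- For all positive integers `a`, `b`, there is a connected graph of diameter `2`
with `-a/b` as a Wiener root. -/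
theorem stmt_11 (a b : ℕ) (ha : 0 < a) (hb : 0 < b) :
    ∃ (n : ℕ) (G : SimpleGraph (Fin n)), G.Connected ∧ G.diam = 2 ∧
      wienerPoly G (-((a : ℂ) / (b : ℂ))) = 0 := by
  set s := a + b with hs
  set n := 2 * s + 1 with hn'
  set k := b * n with hk'
  have hn : 2 ≤ n := by omega
  have hn3 : 3 ≤ n := by omega
  have hk0 : 0 < k := by positivity
  -- k ≤ T2 (n - 1)
  have hkT : k ≤ T2 (n - 1) := by
    have h := two_mul_T2 (2 * s)
    have hc : 2 * s - 1 + 1 = 2 * s := by omega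
    set c := 2 * s - 1 with hcdef
    rw [show n - 1 = 2 * s from by omega]
    have hc2b : 2 * b + 1 ≤ c := by omega
    have hac : c ≤ a * c := Nat.le_mul_of_pos_left c ha
    have hsc : 2 * s * c = 2 * (b * c) + 2 * (a * c) := by rw [hs]; ring
    have hbn : b * n = b * c + 2 * b := by rw [hn', ← hc]; ring
    omega
  have hkTn : k ≤ T2 n := le_trans hkT (T2_mono (by omega))
  refine ⟨n, rgraph n k, rgraph_conn hn hkT, rgraph_diam hn hkT hk0 hn3, ?_⟩
  unfold wienerPoly
  have hS2 : ∀ p ∈ ((Finset.univ : Finset (Fin n)).sym2.filter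
      (fun p => ¬ p.IsDiag)).filter (fun p => rnkS p < k),
      (-((a : ℂ) / (b : ℂ))) ^ Sym2.lift ⟨fun u v => (rgraph n k).dist u v,
        fun u v => SimpleGraph.dist_comm⟩ p = (-((a : ℂ) / (b : ℂ))) ^ 2 := by
    intro p hp
    induction p using Sym2.ind with | _ u v =>
    simp only [Finset.mem_filter, Sym2.mk_isDiag_iff] at hp
    obtain ⟨⟨-, hne⟩, hrk⟩ := hp
    have hD : Sym2.lift ⟨fun u v => (rgraph n k).dist u v,
        fun u v => SimpleGraph.dist_comm⟩ s(u, v) = (rgraph n k).dist u v := rfl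
    rw [hD]
    have hna : ¬ (rgraph n k).Adj u v := by
      intro h
      rcases (show _ ∧ _ from h) with ⟨-, hadj⟩
      have : rnkS s(u, v) = T2 (max u.val v.val) + min u.val v.val := rfl
      omega
    rw [dist_eq_two hn hkT u v hne hna]
  have hS1 : ∀ p ∈ ((Finset.univ : Finset (Fin n)).sym2.filter
      (fun p => ¬ p.IsDiag)).filter (fun p => ¬ rnkS p < k),
      (-((a : ℂ) / (b : ℂ))) ^ Sym2.lift ⟨fun u v => (rgraph n k).dist u v,
        fun u v => SimpleGraph.dist_comm⟩ p = (-((a : ℂ) / (b : ℂ))) ^ 1 := by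
    intro p hp
    induction p using Sym2.ind with | _ u v =>
    simp only [Finset.mem_filter, Sym2.mk_isDiag_iff] at hp
    obtain ⟨⟨-, hne⟩, hrk⟩ := hp
    have hD : Sym2.lift ⟨fun u v => (rgraph n k).dist u v,
        fun u v => SimpleGraph.dist_comm⟩ s(u, v) = (rgraph n k).dist u v := rfl
    rw [hD]
    have hadj : (rgraph n k).Adj u v := by
      show _ ∧ _
      refine ⟨fun h => hne h, ?_⟩
      have : rnkS s(u, v) = T2 (max u.val v.val) + min u.val v.val := rfl
      omega
    rw [SimpleGraph.dist_eq_one_iff_adj.mpr hadj]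
  rw [← Finset.sum_filter_add_sum_filter_not
    ((Finset.univ : Finset (Fin n)).sym2.filter (fun p => ¬ p.IsDiag))
    (fun p => rnkS p < k),
    Finset.sum_congr rfl hS2, Finset.sum_congr rfl hS1,
    Finset.sum_const, Finset.sum_const]
  have hc2 : (((Finset.univ : Finset (Fin n)).sym2.filter
      (fun p => ¬ p.IsDiag)).filter (fun p => rnkS p < k)).card = k :=
    card_rank_lt n k hkTn
  have hcS : ((Finset.univ : Finset (Fin n)).sym2.filter
      (fun p => ¬ p.IsDiag)).card = T2 n := by
    rw [← Finset.filter_true_of_mem (fun p hp => rnkS_lt p (Finset.mem_filter.mp hp).2)]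
    exact card_rank_lt n (T2 n) le_rfl
  have hsplit := Finset.card_filter_add_card_filter_not
    (s := (Finset.univ : Finset (Fin n)).sym2.filter (fun p => ¬ p.IsDiag))
    (p := fun p => rnkS p < k)
  rw [hc2, hcS] at hsplit
  have hc1 : (((Finset.univ : Finset (Fin n)).sym2.filter
      (fun p => ¬ p.IsDiag)).filter (fun p => ¬ rnkS p < k)).card = a * n := by
    have hTn : T2 n = s * n := by
      have h := two_mul_T2 n
      rw [show n - 1 = 2 * s from by omega] at h
      have h3 : n * (2 * s) = 2 * (s * n) := by ring
      rw [h3] at h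
      set P := s * n
      omega
    have hsn : s * n = a * n + b * n := by rw [hs]; ring
    rw [hTn, hsn] at hsplit
    set A := a * n
    set B := b * n
    omega
  rw [hc2, hc1, nsmul_eq_mul, nsmul_eq_mul, hk']
  exact final_arith a b n hb
end

section
/- For every real number M, there exists a connected simple graph G and a complex Wiener root z of G with Im(z) > M. That is, Wiener roots of connected graphs have arbitrarily large imaginary part. -/
set_option linter.unusedVariables false

namespace WAux

/-- Level function on `Fin (n+3)`: vertex `0` at level 0, vertices `1..n` (a clique)
at level 1, vertex `n+1` at level 2, vertex `n+2` at level 3. -/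
def lv (n : ℕ) (i : Fin (n+3)) : ℕ :=
  if (i : ℕ) = 0 then 0 else if (i : ℕ) ≤ n then 1 else if (i : ℕ) = n + 1 then 2 else 3

/-- Two vertices are adjacent iff their levels differ by at most one. -/
def G (n : ℕ) : SimpleGraph (Fin (n+3)) where
  Adj x y := x ≠ y ∧ Nat.dist (lv n x) (lv n y) ≤ 1
  symm := ⟨fun x y h => ⟨h.1.symm, by rw [Nat.dist_comm]; exact h.2⟩⟩
  loopless := ⟨fun x h => h.1 rfl⟩

lemma lv_le (n : ℕ) (i : Fin (n+3)) : lv n i ≤ 3 := by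
  unfold lv; split_ifs <;> simp

lemma lv_eq_zero_iff (n : ℕ) (i : Fin (n+3)) : lv n i = 0 ↔ (i:ℕ) = 0 := by
  unfold lv; split_ifs <;> simp_all

lemma lv_eq_one_iff (n : ℕ) (i : Fin (n+3)) : lv n i = 1 ↔ 1 ≤ (i:ℕ) ∧ (i:ℕ) ≤ n := by
  unfold lv; split_ifs <;> simp <;> omega

lemma lv_eq_two_iff (n : ℕ) (i : Fin (n+3)) : lv n i = 2 ↔ (i:ℕ) = n+1 := by
  unfold lv; split_ifs <;> simp <;> omega

lemma lv_eq_three_iff (n : ℕ) (i : Fin (n+3)) : lv n i = 3 ↔ (i:ℕ) = n+2 := by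
  have := i.isLt
  unfold lv; split_ifs <;> simp <;> omega

lemma exists_lv (n : ℕ) (hn : 1 ≤ n) (k : ℕ) (hk : k ≤ 3) : ∃ m : Fin (n+3), lv n m = k := by
  interval_cases k
  · exact ⟨⟨0, by omega⟩, (lv_eq_zero_iff n _).2 rfl⟩
  · exact ⟨⟨1, by omega⟩, (lv_eq_one_iff n _).2 (by simp; omega)⟩
  · exact ⟨⟨n+1, by omega⟩, (lv_eq_two_iff n _).2 rfl⟩
  · exact ⟨⟨n+2, by omega⟩, (lv_eq_three_iff n _).2 rfl⟩

lemma lv_dist_le_length {n : ℕ} {x y : Fin (n+3)} (w : (G n).Walk x y) :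
    Nat.dist (lv n x) (lv n y) ≤ w.length := by
  induction w with
  | nil => simp [Nat.dist_self]
  | cons h p ih =>
    calc Nat.dist (lv n _) (lv n _) ≤ Nat.dist (lv n _) (lv n _) + Nat.dist (lv n _) (lv n _) :=
          Nat.dist.triangle_inequality _ _ _
      _ ≤ 1 + _ := add_le_add h.2 ih
      _ = _ := by rw [SimpleGraph.Walk.length_cons]; omega

lemma exists_walk (n : ℕ) (hn : 1 ≤ n) :
    ∀ k (x y : Fin (n+3)), Nat.dist (lv n x) (lv n y) ≤ k →
      ∃ w : (G n).Walk x y, w.length ≤ max k 1 := by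
  intro k
  induction k with
  | zero =>
    intro x y h
    by_cases hxy : x = y
    · subst hxy; exact ⟨.nil, by simp⟩
    · exact ⟨.cons (show (G n).Adj x y from ⟨hxy, by omega⟩) .nil, by simp⟩
  | succ k ih =>
    intro x y h
    by_cases hk : Nat.dist (lv n x) (lv n y) ≤ k
    · obtain ⟨w, hw⟩ := ih x y hk
      exact ⟨w, hw.trans (by omega)⟩
    · have hd : Nat.dist (lv n x) (lv n y) = k + 1 := by omega
      by_cases hxy : x = y
      · subst hxy; simp [Nat.dist_self] at hd
      by_cases hk0 : k = 0
      · exact ⟨.cons (show (G n).Adj x y from ⟨hxy, by omega⟩) .nil, by simp⟩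
      · have hne : lv n x ≠ lv n y := by
          intro hEq; rw [hEq, Nat.dist_self] at hd; omega
        set t : ℕ := if lv n x < lv n y then lv n x + 1 else lv n x - 1 with ht
        have ht3 : t ≤ 3 := by
          have h1 := lv_le n x; have h2 := lv_le n y
          simp only [ht]; split_ifs <;> omega
        obtain ⟨m, hm⟩ := exists_lv n hn t ht3
        have hmx : lv n m ≠ lv n x := by
          rw [hm]; simp only [ht]
          have : Nat.dist (lv n x) (lv n y) ≥ 1 := by omega
          split_ifs <;> simp [Nat.dist] at hd ⊢ <;> omega
        have hadj : (G n).Adj x m := by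
          refine ⟨fun hEq => hmx (by rw [hEq]), ?_⟩
          rw [hm]; simp only [ht]; split_ifs <;> simp [Nat.dist] <;> omega
        have hrest : Nat.dist (lv n m) (lv n y) ≤ k := by
          rw [hm]; simp only [ht]
          simp [Nat.dist] at hd ⊢
          split_ifs <;> omega
        obtain ⟨w, hw⟩ := ih m y hrest
        refine ⟨.cons hadj w, ?_⟩
        simp [SimpleGraph.Walk.length_cons] at hw ⊢
        omega

lemma G_preconnected (n : ℕ) (hn : 1 ≤ n) : (G n).Preconnected := by
  intro x y
  obtain ⟨w, _⟩ := exists_walk n hn 3 x y (by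
    have h1 := lv_le n x; have h2 := lv_le n y
    simp [Nat.dist]; omega)
  exact ⟨w⟩

lemma G_connected (n : ℕ) (hn : 1 ≤ n) : (G n).Connected :=
  (SimpleGraph.connected_iff _).mpr ⟨G_preconnected n hn, ⟨⟨0, by omega⟩⟩⟩

lemma dist_eq (n : ℕ) (hn : 1 ≤ n) {x y : Fin (n+3)} (hxy : x ≠ y) :
    (G n).dist x y = max (Nat.dist (lv n x) (lv n y)) 1 := by
  apply le_antisymm
  · obtain ⟨w, hw⟩ := exists_walk n hn (Nat.dist (lv n x) (lv n y)) x y le_rfl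
    exact (SimpleGraph.dist_le w).trans hw
  · obtain ⟨w, hw⟩ := (G_preconnected n hn x y).exists_walk_length_eq_dist
    have h1 := lv_dist_le_length w
    have h2 : 1 ≤ w.length := by
      rcases Nat.eq_zero_or_pos w.length with h | h
      · exact absurd (w.eq_of_length_eq_zero h) hxy
      · exact h
    omega

/-- the off-diagonal pairs -/
noncomputable def S (n : ℕ) : Finset (Sym2 (Fin (n+3))) :=
  (Finset.univ : Finset (Fin (n+3))).sym2.filter (fun p => ¬ p.IsDiag)

lemma card_S (n : ℕ) : 2 * (S n).card = (n+3) * (n+2) := by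
  classical
  have h1 : (S n).card
      = (Finset.univ : Finset (Fin (n+3))).sym2.card
        - ((Finset.univ : Finset (Fin (n+3))).sym2.filter (fun p => p.IsDiag)).card := by
    rw [S, Finset.filter_not, Finset.card_sdiff_of_subset (Finset.filter_subset _ _)]
  have h2 : (Finset.univ : Finset (Fin (n+3))).sym2.card = Nat.choose (n+3+1) 2 := by
    rw [Finset.card_sym2]; simp
  have h3 : ((Finset.univ : Finset (Fin (n+3))).sym2.filter (fun p => p.IsDiag))
      = (Finset.univ : Finset (Fin (n+3))).image Sym2.diag := by
    ext p
    induction p using Sym2.ind with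
    | _ x y =>
      simp only [Finset.mem_filter, Finset.mem_image, Finset.mem_univ, true_and,
        Sym2.mk_isDiag_iff, Finset.mk_mem_sym2_iff]
      constructor
      · rintro rfl; exact ⟨x, by rw [Sym2.diag]⟩
      · rintro ⟨a, ha⟩
        rcases Sym2.eq_iff.1 ha.symm with ⟨rfl, rfl⟩ | ⟨rfl, rfl⟩ <;> rfl
  have h4 : ((Finset.univ : Finset (Fin (n+3))).image Sym2.diag).card = n + 3 := by
    rw [Finset.card_image_of_injective _ Sym2.diag_injective, Finset.card_univ, Fintype.card_fin]
  have h5 : Nat.choose (n+3+1) 2 = (n+4) * (n+3) / 2 := Nat.choose_two_right _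
  have h6 : 2 ∣ (n+4) * (n+3) := by
    have := Nat.even_mul_succ_self (n+3)
    rw [mul_comm]
    exact this.two_dvd
  have h7 : 2 * ((n+4) * (n+3) / 2) = (n+4) * (n+3) := Nat.mul_div_cancel' h6
  have e1 : (n+4)*(n+3) = (n+3)*(n+2) + 2*(n+3) := by ring
  rw [h3] at h1
  omega

/-- The lifted "level distance" function on unordered pairs. -/
def DL (n : ℕ) : Sym2 (Fin (n+3)) → ℕ :=
  Sym2.lift ⟨fun x y => max (Nat.dist (lv n x) (lv n y)) 1,
    fun x y => by show max (Nat.dist (lv n x) (lv n y)) 1 = max (Nat.dist (lv n y) (lv n x)) 1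
                  rw [Nat.dist_comm]⟩

lemma mem_S_iff (n : ℕ) (x y : Fin (n+3)) : s(x, y) ∈ S n ↔ x ≠ y := by
  simp [S, Finset.mk_mem_sym2_iff, Sym2.mk_isDiag_iff]

lemma card_filter_DL3 (n : ℕ) :
    ((S n).filter (fun p => DL n p = 3)).card = 1 := by
  classical
  set u0 : Fin (n+3) := ⟨0, by omega⟩ with hu0def
  set vv : Fin (n+3) := ⟨n+2, by omega⟩ with hvvdef
  have h0 : lv n u0 = 0 := (lv_eq_zero_iff n _).2 rfl
  have h3 : lv n vv = 3 := (lv_eq_three_iff n _).2 rfl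
  have : (S n).filter (fun p => DL n p = 3) = {s(u0, vv)} := by
    ext p
    induction p using Sym2.ind with
    | _ x y =>
      rw [Finset.mem_filter, mem_S_iff, Finset.mem_singleton, Sym2.eq_iff]
      simp only [DL, Sym2.lift_mk]
      have hx := lv_le n x; have hy := lv_le n y
      constructor
      · rintro ⟨hxy, hd⟩
        have hcase : (lv n x = 0 ∧ lv n y = 3) ∨ (lv n x = 3 ∧ lv n y = 0) := by
          simp only [Nat.dist] at hd; omega
        rcases hcase with ⟨ha, hb⟩ | ⟨hb, ha⟩
        · left
          rw [lv_eq_zero_iff] at ha; rw [lv_eq_three_iff] at hb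
          exact ⟨Fin.ext ha, Fin.ext hb⟩
        · right
          rw [lv_eq_three_iff] at hb; rw [lv_eq_zero_iff] at ha
          exact ⟨Fin.ext hb, Fin.ext ha⟩
      · rintro (⟨rfl, rfl⟩ | ⟨rfl, rfl⟩)
        · refine ⟨fun hEq => ?_, ?_⟩
          · rw [hEq] at h0; omega
          · simp only [Nat.dist]; omega
        · refine ⟨fun hEq => ?_, ?_⟩
          · rw [hEq] at h3; omega
          · simp only [Nat.dist]; omega
  rw [this, Finset.card_singleton]

lemma card_filter_DL2 (n : ℕ) :
    ((S n).filter (fun p => DL n p = 2)).card = n + 1 := by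
  classical
  set u0 : Fin (n+3) := ⟨0, by omega⟩ with hu0def
  set ww : Fin (n+3) := ⟨n+1, by omega⟩ with hwwdef
  set vv : Fin (n+3) := ⟨n+2, by omega⟩ with hvvdef
  have hu0 : lv n u0 = 0 := (lv_eq_zero_iff n _).2 rfl
  have hww : lv n ww = 2 := (lv_eq_two_iff n _).2 rfl
  have hvv : lv n vv = 3 := (lv_eq_three_iff n _).2 rfl
  have hset : (S n).filter (fun p => DL n p = 2)
      = insert s(u0, ww)
          ((Finset.univ.filter (fun b : Fin (n+3) => lv n b = 1)).image (fun b => s(b, vv))) := by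
    ext p
    induction p using Sym2.ind with
    | _ x y =>
      rw [Finset.mem_filter, mem_S_iff, Finset.mem_insert]
      simp only [DL, Sym2.lift_mk, Finset.mem_image, Finset.mem_filter, Finset.mem_univ, true_and]
      have hx := lv_le n x; have hy := lv_le n y
      constructor
      · rintro ⟨hxy, hd⟩
        have hcase : (lv n x = 0 ∧ lv n y = 2) ∨ (lv n x = 2 ∧ lv n y = 0)
            ∨ (lv n x = 1 ∧ lv n y = 3) ∨ (lv n x = 3 ∧ lv n y = 1) := by
          simp only [Nat.dist] at hd; omega
        rcases hcase with ⟨h0, h2⟩ | ⟨h2, h0⟩ | ⟨h1, h3⟩ | ⟨h3, h1⟩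
        · left
          rw [lv_eq_zero_iff] at h0; rw [lv_eq_two_iff] at h2
          rw [Sym2.eq_iff]; left; exact ⟨Fin.ext h0, Fin.ext h2⟩
        · left
          rw [lv_eq_two_iff] at h2; rw [lv_eq_zero_iff] at h0
          rw [Sym2.eq_iff]; right; exact ⟨Fin.ext h2, Fin.ext h0⟩
        · right
          rw [lv_eq_three_iff] at h3
          exact ⟨x, h1, by rw [Sym2.eq_iff]; left; exact ⟨rfl, (Fin.ext h3).symm⟩⟩
        · right
          rw [lv_eq_three_iff] at h3
          exact ⟨y, h1, by rw [Sym2.eq_iff]; right; exact ⟨rfl, (Fin.ext h3).symm⟩⟩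
      · rintro (h | ⟨b, hb, h⟩)
        · rcases Sym2.eq_iff.1 h with ⟨rfl, rfl⟩ | ⟨rfl, rfl⟩
          · refine ⟨fun hEq => ?_, ?_⟩
            · rw [hEq] at hu0; omega
            · simp only [Nat.dist]; omega
          · refine ⟨fun hEq => ?_, ?_⟩
            · rw [hEq] at hww; omega
            · simp only [Nat.dist]; omega
        · rcases Sym2.eq_iff.1 h with ⟨rfl, rfl⟩ | ⟨rfl, rfl⟩
          · refine ⟨fun hEq => ?_, ?_⟩
            · rw [hEq] at hb; omega
            · simp only [Nat.dist]; omega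
          · refine ⟨fun hEq => ?_, ?_⟩
            · rw [← hEq] at hb; omega
            · simp only [Nat.dist]; omega
  rw [hset]
  have hnotmem : s(u0, ww) ∉
      (Finset.univ.filter (fun b : Fin (n+3) => lv n b = 1)).image (fun b => s(b, vv)) := by
    intro hmem
    rw [Finset.mem_image] at hmem
    obtain ⟨b, hb, h⟩ := hmem
    rw [Finset.mem_filter] at hb
    rcases Sym2.eq_iff.1 h with ⟨h1, h2⟩ | ⟨h1, h2⟩
    · rw [← h2] at hww; omega
    · rw [h2] at hvv; omega
  rw [Finset.card_insert_of_notMem hnotmem]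
  have hinj : Set.InjOn (fun b => s(b, vv))
      ↑(Finset.univ.filter (fun b : Fin (n+3) => lv n b = 1)) := by
    intro a ha b hb h
    simp only [Finset.coe_filter, Set.mem_setOf_eq] at ha hb
    rcases Sym2.eq_iff.1 h with ⟨h1, -⟩ | ⟨h1, h2⟩
    · exact h1
    · rw [h1] at ha; rw [ha.2] at hvv; omega
  rw [Finset.card_image_of_injOn hinj]
  have hcard : (Finset.univ.filter (fun b : Fin (n+3) => lv n b = 1)).card = n := by
    have hbij : (Finset.univ.filter (fun b : Fin (n+3) => lv n b = 1)).card
        = (Finset.Icc 1 n).card := by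
      refine Finset.card_nbij (fun b => (b : ℕ)) ?_ ?_ ?_
      · intro a ha
        rw [Finset.mem_coe, Finset.mem_filter, lv_eq_one_iff] at ha
        rw [Finset.mem_coe, Finset.mem_Icc]; exact ha.2
      · intro a _ b _ h; exact Fin.ext h
      · intro c hc
        simp only [Finset.coe_Icc, Set.mem_Icc] at hc
        refine ⟨⟨c, by omega⟩, ?_, rfl⟩
        simp only [Finset.coe_filter, Set.mem_setOf_eq]
        exact ⟨Finset.mem_univ _, (lv_eq_one_iff n _).2 (by simpa using hc)⟩
      
    rw [hbij, Nat.card_Icc]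
    omega
  omega

lemma pow_decomp (z : ℂ) (d : ℕ) (h1 : 1 ≤ d) (h3 : d ≤ 3) :
    z ^ d = z + (z^2 - z) * (if d = 2 then 1 else 0) + (z^3 - z) * (if d = 3 then 1 else 0) := by
  interval_cases d <;> norm_num

lemma dF_eq_DL (n : ℕ) (hn : 1 ≤ n) (p : Sym2 (Fin (n+3))) (hp : p ∈ S n) :
    Sym2.lift ⟨fun u v => (G n).dist u v, fun u v => SimpleGraph.dist_comm⟩ p = DL n p := by
  induction p using Sym2.ind with
  | _ x y =>
    rw [mem_S_iff] at hp
    simp only [DL, Sym2.lift_mk]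
    exact dist_eq n hn hp

lemma DL_bounds (n : ℕ) (p : Sym2 (Fin (n+3))) : 1 ≤ DL n p ∧ DL n p ≤ 3 := by
  induction p using Sym2.ind with
  | _ x y =>
    simp only [DL, Sym2.lift_mk]
    have h1 := lv_le n x; have h2 := lv_le n y
    constructor
    · omega
    · simp only [Nat.dist]; omega

end WAux

/-- Wiener roots of connected graphs have arbitrarily large imaginary part. -/
theorem stmt_15 (M : ℝ) :
    ∃ (n : ℕ) (G : SimpleGraph (Fin n)) (z : ℂ), G.Connected ∧
      wienerPoly G z = 0 ∧ M < z.im := by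
  classical
  obtain ⟨m, hm, hMm⟩ : ∃ m : ℕ, 1 ≤ m ∧ 2*M ≤ (m:ℝ) - 1 := by
    refine ⟨⌈2*M⌉₊ + 1, Nat.le_add_left 1 _, ?_⟩
    have := Nat.le_ceil (2*M)
    push_cast
    linarith
  set s : ℝ := Real.sqrt (((m:ℝ)+1)*((m:ℝ)+3)) with hsdef
  set z : ℂ := ⟨-((m:ℝ)+1)/2, s/2⟩ with hzdef
  refine ⟨m+3, WAux.G m, z, WAux.G_connected m hm, ?_, ?_⟩
  · -- wienerPoly (G m) z = 0
    have hs2 : ((s:ℂ))^2 = ((m:ℂ)+1)*((m:ℂ)+3) := by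
      have h0 : (0:ℝ) ≤ ((m:ℝ)+1)*((m:ℝ)+3) := by positivity
      have hsq := Real.sq_sqrt h0
      rw [hsdef]
      calc ((Real.sqrt (((m:ℝ)+1)*((m:ℝ)+3)) : ℝ) : ℂ)^2
          = ((Real.sqrt (((m:ℝ)+1)*((m:ℝ)+3)) ^ 2 : ℝ) : ℂ) := by push_cast; ring
        _ = ((((m:ℝ)+1)*((m:ℝ)+3) : ℝ) : ℂ) := by rw [hsq]
        _ = ((m:ℂ)+1)*((m:ℂ)+3) := by push_cast; ring
    have hzform : z = (↑(-((m:ℝ)+1)/2) : ℂ) + (↑(s/2) : ℂ) * Complex.I := by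
      rw [hzdef]; exact Complex.mk_eq_add_mul_I _ _
    have hz : z^2 + ((m:ℂ)+1)*z + ((m:ℂ)+1)*((m:ℂ)+2)/2 = 0 := by
      rw [hzform]
      push_cast
      linear_combination (Complex.I^2/4) * hs2 + (((m:ℂ)+1)*((m:ℂ)+3)/4) * Complex.I_sq
    have hA : (2:ℂ) * ((WAux.S m).card : ℂ) = ((m:ℂ)+3)*((m:ℂ)+2) := by
      exact_mod_cast WAux.card_S m
    rw [wienerPoly]
    have hSdef : ((Finset.univ : Finset (Fin (m+3))).sym2.filter (fun p => ¬ p.IsDiag))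
        = WAux.S m := rfl
    rw [hSdef]
    have hstep1 : ∑ p ∈ WAux.S m,
        z ^ Sym2.lift ⟨fun u v => (WAux.G m).dist u v, fun u v => SimpleGraph.dist_comm⟩ p
        = ∑ p ∈ WAux.S m, (z + (z^2 - z) * (if WAux.DL m p = 2 then 1 else 0)
            + (z^3 - z) * (if WAux.DL m p = 3 then 1 else 0)) :=
      Finset.sum_congr rfl (fun p hp => by
        rw [WAux.dF_eq_DL m hm p hp]
        exact WAux.pow_decomp z _ (WAux.DL_bounds m p).1 (WAux.DL_bounds m p).2)
    rw [hstep1, Finset.sum_add_distrib, Finset.sum_add_distrib, Finset.sum_const,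
      ← Finset.mul_sum, ← Finset.mul_sum, Finset.sum_boole, Finset.sum_boole,
      WAux.card_filter_DL2, WAux.card_filter_DL3]
    rw [nsmul_eq_mul]
    push_cast
    linear_combination z * hz + (z/2) * hA
  · -- M < z.im
    have him : z.im = s/2 := rfl
    rw [him]
    have h2 : ((m:ℝ)+1) ≤ s := by
      rw [hsdef]
      have h3 : ((m:ℝ)+1) = Real.sqrt (((m:ℝ)+1)^2) := (Real.sqrt_sq (by positivity)).symm
      rw [h3]
      apply Real.sqrt_le_sqrt
      nlinarith [Nat.cast_nonneg (α := ℝ) m]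
    linarith
end
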